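/- arXiv:2304.07532 — 7 statements merged into one kernel-verified Lean document; each statement's English description precedes it below -/
import Mathlib

section
/- Let d ≥ 1 and let 1 < β_1 ≤ β_2 ≤ … ≤ β_d, and let T be the diagonal self-map of 𝕋^d acting coordinatewise as the β_i-transformations. Let {f_n}_{n≥1} be a sequence of maps 𝕋^d → 𝕋^d with a uniform Lipschitz constant and let ψ : ℕ → (0,∞). If liminf_{n→∞} (−log ψ(n))/n = ∞, then the set W(T,ψ,{f_n}) := {x ∈ 𝕋^d : |T_{β_i}^n(x_i) − f_n^{(i)}(x)| < ψ(n) for all 1 ≤ i ≤ d, for infinitely many n ∈ ℕ} has Hausdorff dimension 0. -/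
open Filter MeasureTheory
open scoped ENNReal

/-- The β-transformation `x ↦ βx - ⌊βx⌋` on `[0,1)`. -/
noncomputable def betaT (β : ℝ) : ℝ → ℝ := fun x => Int.fract (β * x)

/-- The usual metric on the torus `𝕋 = ℝ/ℤ`: distance from `a - b` to the nearest integer. -/
noncomputable def tdist (a b : ℝ) : ℝ := ⨅ k : ℤ, |a - b - (k : ℝ)|

/-- The metric on `𝕋^d` induced by the Euclidean metric, on representatives in `[0,1)^d`. -/
noncomputable def tdistVec {d : ℕ} (x y : Fin d → ℝ) : ℝ :=
  Real.sqrt (∑ i, (tdist (x i) (y i)) ^ 2)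

/-!
Split the `n`-th target set according to the first `n` digits of the `β_i`-expansion of every
coordinate and one binary digit of `T_{β_i}^n x_i`; this gives at most `q ^ n * 2 ^ d` pieces with
`q = ∏ i, (⌊β_i⌋ + 1)`. On a piece `T^n` acts in coordinate `i` as the stretch by `β_i ^ n`, so the
target condition together with the Lipschitz bound on `f_n` confines the piece to diameter
`4 ψ(n)` as soon as `β_i ^ n ≥ 2 c √d`. Since `ψ` decays faster than any exponential,
`∑ₙ q ^ n ψ(n) ^ s < ∞` for every `s > 0`, and the Hausdorff–Cantelli lemma gives `μH[s] W = 0`.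
-/

open Set Topology Metric
open scoped NNReal

theorem tdist_eq_dist (a b : ℝ) : tdist a b = dist (a : UnitAddCircle) (b : UnitAddCircle) := by
  rw [dist_eq_norm, ← AddCircle.coe_sub, UnitAddCircle.norm_eq]
  refine le_antisymm (ciInf_le ⟨0, ?_⟩ (round (a - b))) (le_ciInf fun k => round_le _ k)
  rintro _ ⟨k, rfl⟩
  exact abs_nonneg _

theorem tdist_le_abs_sub (a b : ℝ) : tdist a b ≤ |a - b| := by
  rw [tdist_eq_dist, dist_eq_norm, ← AddCircle.coe_sub, UnitAddCircle.norm_eq]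
  simpa using round_le (a - b) 0

theorem tdist_eq_abs_sub {a b : ℝ} (h : |a - b| ≤ 1 / 2) : tdist a b = |a - b| := by
  rw [tdist_eq_dist, dist_eq_norm, ← AddCircle.coe_sub,
    AddCircle.norm_coe_eq_abs_iff (p := 1) one_ne_zero]
  simpa using h

theorem tdist_le_tdistVec {d : ℕ} (x y : Fin d → ℝ) (i : Fin d) :
    tdist (x i) (y i) ≤ tdistVec x y := by
  refine Real.le_sqrt_of_sq_le ?_
  exact Finset.single_le_sum (f := fun j => tdist (x j) (y j) ^ 2) (fun j _ => sq_nonneg _)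
    (Finset.mem_univ i)

theorem tdistVec_le_sqrt_mul_dist {d : ℕ} (x y : Fin d → ℝ) :
    tdistVec x y ≤ √d * dist x y := by
  rw [← Real.sqrt_sq dist_nonneg, ← Real.sqrt_mul (Nat.cast_nonneg d)]
  refine Real.sqrt_le_sqrt ?_
  calc ∑ i, tdist (x i) (y i) ^ 2 ≤ ∑ _i : Fin d, dist x y ^ 2 := by
        gcongr with i
        · rw [tdist_eq_dist]; exact dist_nonneg
        · exact (tdist_le_abs_sub _ _).trans ((Real.dist_eq _ _).ge.trans (dist_le_pi_dist x y i))
    _ = d * dist x y ^ 2 := by simp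

theorem betaT_iterate_mem_Ico {β x : ℝ} (hx : x ∈ Ico (0 : ℝ) 1) (n : ℕ) :
    (betaT β)^[n] x ∈ Ico (0 : ℝ) 1 := by
  cases n with
  | zero => exact hx
  | succ n =>
    rw [Function.iterate_succ_apply']
    exact ⟨Int.fract_nonneg _, Int.fract_lt_one _⟩

theorem betaT_iterate_sub_betaT_iterate {β x y : ℝ} {n : ℕ}
    (h : ∀ j < n, ⌊β * (betaT β)^[j] x⌋ = ⌊β * (betaT β)^[j] y⌋) :
    (betaT β)^[n] x - (betaT β)^[n] y = β ^ n * (x - y) := by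
  induction n with
  | zero => simp
  | succ n ih =>
    simp only [Function.iterate_succ_apply', betaT, Int.fract]
    rw [h n n.lt_succ_self, pow_succ', mul_assoc, ← ih fun j hj => h j (hj.trans n.lt_succ_self)]
    ring

theorem pow_mul_abs_sub_eq_tdist {β x y : ℝ} {n : ℕ} (hβ : 0 ≤ β) (hx : x ∈ Ico (0 : ℝ) 1)
    (hy : y ∈ Ico (0 : ℝ) 1)
    (hdigits : ∀ j < n, ⌊β * (betaT β)^[j] x⌋₊ = ⌊β * (betaT β)^[j] y⌋₊)
    (hhalf : ⌊2 * (betaT β)^[n] x⌋₊ = ⌊2 * (betaT β)^[n] y⌋₊) :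
    β ^ n * |x - y| = tdist ((betaT β)^[n] x) ((betaT β)^[n] y) := by
  have hx' := betaT_iterate_mem_Ico (β := β) hx
  have hy' := betaT_iterate_mem_Ico (β := β) hy
  have hsub : (betaT β)^[n] x - (betaT β)^[n] y = β ^ n * (x - y) := by
    refine betaT_iterate_sub_betaT_iterate fun j hj => ?_
    rw [← Int.natCast_floor_eq_floor (mul_nonneg hβ (hx' j).1),
      ← Int.natCast_floor_eq_floor (mul_nonneg hβ (hy' j).1), hdigits j hj]
  have hclose : |(betaT β)^[n] x - (betaT β)^[n] y| ≤ 1 / 2 := by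
    have := Int.abs_sub_lt_one_of_floor_eq_floor (R := ℝ)
      (a := 2 * (betaT β)^[n] x) (b := 2 * (betaT β)^[n] y) (by
        rw [← Int.natCast_floor_eq_floor (by linarith [(hx' n).1]),
          ← Int.natCast_floor_eq_floor (by linarith [(hy' n).1]), hhalf])
    rw [← mul_sub, abs_mul, abs_two] at this
    linarith
  rw [tdist_eq_abs_sub hclose, hsub, abs_mul, abs_of_nonneg (pow_nonneg hβ n)]

section Coding

variable {d : ℕ} (β : Fin d → ℝ)

/-- The first `n` digits of the `β_i`-expansion of each `x_i`, and the first binary digit of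
`T_{β_i}^n x_i`. Points with the same code satisfy `T^n x_i - T^n y_i = β_i ^ n (x_i - y_i)`, and
the binary digit keeps these images within `1/2` of each other, so that their torus distance is
their real distance. -/
noncomputable def betaCode (n : ℕ) (x : Fin d → ℝ) : (Fin d → Fin n → ℕ) × (Fin d → ℕ) :=
  (fun i j => ⌊β i * (betaT (β i))^[j] (x i)⌋₊, fun i => ⌊2 * (betaT (β i))^[n] (x i)⌋₊)

noncomputable def betaCodes (n : ℕ) : Finset ((Fin d → Fin n → ℕ) × (Fin d → ℕ)) :=
  Fintype.piFinset (fun i => Fintype.piFinset fun _ => Finset.range (⌊β i⌋₊ + 1)) ×ˢ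
    Fintype.piFinset fun _ => Finset.range 2

theorem card_betaCodes (n : ℕ) : (betaCodes β n).card = (∏ i, (⌊β i⌋₊ + 1)) ^ n * 2 ^ d := by
  simp [betaCodes, Finset.prod_pow]

variable {β}

theorem betaCode_mem_betaCodes (hβ : ∀ i, 0 ≤ β i) {x : Fin d → ℝ}
    (hx : ∀ i, x i ∈ Ico (0 : ℝ) 1) (n : ℕ) : betaCode β n x ∈ betaCodes β n := by
  simp only [betaCode, betaCodes, Finset.mem_product, Fintype.mem_piFinset, Finset.mem_range]
  refine ⟨fun i j => Nat.lt_succ_of_le (Nat.floor_le_floor ?_), fun i => ?_⟩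
  · exact mul_le_of_le_one_right (hβ i) (betaT_iterate_mem_Ico (hx i) j).2.le
  · obtain ⟨h0, h1⟩ := betaT_iterate_mem_Ico (β := β i) (hx i) n
    exact (Nat.floor_lt (by positivity)).2 (by norm_num; linarith)

theorem dist_le_of_betaCode_eq (hβ : ∀ i, 1 ≤ β i) {c r : ℝ} (hc : 0 ≤ c) (hr : 0 ≤ r) {n : ℕ}
    (hexp : ∀ i, 2 * c * √d ≤ β i ^ n) (g : (Fin d → ℝ) → Fin d → ℝ) {x y : Fin d → ℝ}
    (hg : tdistVec (g x) (g y) ≤ c * tdistVec x y)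
    (hx : ∀ i, x i ∈ Ico (0 : ℝ) 1) (hy : ∀ i, y i ∈ Ico (0 : ℝ) 1)
    (hcode : betaCode β n x = betaCode β n y)
    (hxg : ∀ i, tdist ((betaT (β i))^[n] (x i)) (g x i) < r)
    (hyg : ∀ i, tdist ((betaT (β i))^[n] (y i)) (g y i) < r) :
    dist x y ≤ 4 * r := by
  set δ := dist x y
  suffices h : ∀ i, dist (x i) (y i) ≤ 2 * r + δ / 2 by
    linarith [(dist_pi_le_iff (by positivity)).2 h]
  intro i
  have hB : 1 ≤ β i ^ n := one_le_pow₀ (hβ i)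
  have hstretch : β i ^ n * |x i - y i| ≤ 2 * r + c * √d * δ := by
    rw [pow_mul_abs_sub_eq_tdist (zero_le_one.trans (hβ i)) (hx i) (hy i)
      (fun j hj => congrFun (congrFun (congrArg Prod.fst hcode) i) ⟨j, hj⟩)
      (congrFun (congrArg Prod.snd hcode) i)]
    simp only [tdist_eq_dist] at hxg hyg ⊢
    calc _ ≤ _ := dist_triangle4 _ ((g x i : ℝ) : UnitAddCircle) (g y i) _
      _ ≤ r + c * √d * δ + r := by
        gcongr
        · exact (hxg i).le
        · rw [← tdist_eq_dist, mul_assoc]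
          refine (tdist_le_tdistVec _ _ i).trans (hg.trans ?_)
          gcongr
          exact tdistVec_le_sqrt_mul_dist x y
        · rw [dist_comm]; exact (hyg i).le
      _ = 2 * r + c * √d * δ := by ring
  rw [Real.dist_eq]
  refine le_of_mul_le_mul_left ?_ (zero_lt_one.trans_le hB)
  -- `β_i ^ n ≥ 2 c √d` absorbs the term `c √d δ` fed back by the Lipschitz bound
  nlinarith [hexp i, dist_nonneg (x := x) (y := y)]

end Coding

theorem hausdorffMeasure_limsup_eq_zero {X : Type*} [EMetricSpace X] [MeasurableSpace X]
    [BorelSpace X] {s : ℝ} (hs : 0 < s) {A : ℕ → Set X} {t : ℕ → Finset (Set X)}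
    {a : ℕ → ℝ≥0∞} (hcover : ∀ᶠ n in atTop, A n ⊆ ⋃₀ (t n : Set (Set X)))
    (hsum : ∀ᶠ n in atTop, ∑ E ∈ t n, ediam E ^ s ≤ a n) (ha : ∑' n, a n ≠ ∞) :
    μH[s] (limsup A atTop) = 0 := by
  obtain ⟨N, hN⟩ := eventually_atTop.1 (hcover.and hsum)
  set tail : ℕ → ℝ≥0∞ := fun n => ∑' k, a (k + n)
  have htail : Tendsto tail atTop (𝓝 0) := ENNReal.tendsto_sum_nat_add a ha
  have hdiam : ∀ n, N ≤ n → ∀ k, ∀ E ∈ t (n + k), ediam E ≤ tail n ^ s⁻¹ := by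
    intro n hn k E hE
    rw [ENNReal.le_rpow_inv_iff hs]
    calc ediam E ^ s ≤ ∑ E ∈ t (n + k), ediam E ^ s :=
          Finset.single_le_sum (f := fun E => ediam E ^ s) (fun _ _ => zero_le) hE
      _ ≤ a (n + k) := (hN (n + k) (by omega)).2
      _ ≤ tail n := add_comm n k ▸ ENNReal.le_tsum k
  have hr : Tendsto (fun n => tail n ^ s⁻¹) atTop (𝓝 0) := by
    have := ((ENNReal.continuous_rpow_const (y := s⁻¹)).tendsto 0).comp htail
    rwa [ENNReal.zero_rpow_of_pos (inv_pos.2 hs)] at this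
  refine le_antisymm ?_ zero_le
  calc μH[s] (limsup A atTop)
      ≤ liminf (fun n => ∑' p : Σ k, t (n + k), ediam (p.2 : Set X) ^ s)
          atTop := by
        refine Measure.hausdorffMeasure_le_liminf_tsum s _ _ hr _ ?_ ?_
        · filter_upwards [eventually_ge_atTop N] with n hn
          exact fun ⟨k, E, hE⟩ => hdiam n hn k E hE
        · filter_upwards [eventually_ge_atTop N] with n hn x hx
          obtain ⟨m, hnm, hxm⟩ := frequently_atTop.1 (mem_limsup_iff_frequently_mem.1 hx) n
          obtain ⟨k, rfl⟩ := Nat.exists_eq_add_of_le hnm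
          obtain ⟨E, hE, hxE⟩ := (hN (n + k) (by omega)).1 hxm
          exact mem_iUnion.2 ⟨⟨k, E, hE⟩, hxE⟩
    _ ≤ liminf tail atTop := by
        refine liminf_le_liminf ?_
        filter_upwards [eventually_ge_atTop N] with n hn
        rw [ENNReal.tsum_sigma']
        refine ENNReal.tsum_le_tsum fun k => ?_
        rw [add_comm k n]
        exact (Finset.tsum_subtype (t (n + k)) fun E => ediam E ^ s).trans_le
          (hN (n + k) (by omega)).2
    _ = 0 := htail.liminf_eq

theorem dimH_eq_zero_of_hausdorffMeasure_eq_zero {X : Type*} [EMetricSpace X] [MeasurableSpace X]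
    [BorelSpace X] {S : Set X} (h : ∀ s : ℝ≥0, 0 < s → μH[s] S = 0) : dimH S = 0 := by
  refine le_antisymm (ENNReal.le_of_forall_pos_le_add fun s hs _ => ?_) zero_le
  rw [zero_add]
  exact dimH_le_of_hausdorffMeasure_ne_top (by simp [h s hs])

theorem eventually_le_pow_of_liminf_eq_top {ψ : ℕ → ℝ}
    (hτ : liminf (fun n : ℕ => ENNReal.ofReal (-Real.log (ψ n) / n)) atTop = ⊤) {ρ : ℝ}
    (hρ : 0 < ρ) : ∀ᶠ n in atTop, ψ n ≤ ρ ^ n := by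
  have hlt : ENNReal.ofReal (-Real.log ρ) <
      liminf (fun n : ℕ => ENNReal.ofReal (-Real.log (ψ n) / n)) atTop :=
    hτ ▸ ENNReal.ofReal_lt_top
  filter_upwards [eventually_lt_of_lt_liminf hlt, eventually_ge_atTop 1] with n hn hn1
  have hn0 : (0 : ℝ) < n := by exact_mod_cast hn1
  have hlog : Real.log (ψ n) < n * Real.log ρ := by
    have := (ENNReal.ofReal_lt_ofReal_iff'.1 hn).1
    rw [lt_div_iff₀ hn0] at this
    linarith
  calc ψ n ≤ Real.exp (Real.log (ψ n)) := Real.le_exp_log _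
    _ ≤ Real.exp (n * Real.log ρ) := Real.exp_le_exp.2 hlog.le
    _ = ρ ^ n := by rw [Real.exp_nat_mul, Real.exp_log hρ]

theorem eventually_pow_mul_rpow_le {ψ : ℕ → ℝ}
    (hτ : liminf (fun n : ℕ => ENNReal.ofReal (-Real.log (ψ n) / n)) atTop = ⊤) {q : ℕ}
    (hq : 0 < q) {s : ℝ} (hs : 0 < s) :
    ∀ᶠ n in atTop, (q : ℝ≥0∞) ^ n * ENNReal.ofReal (ψ n) ^ s ≤ 2⁻¹ ^ n := by
  set ρ : ℝ := ((2 * q : ℝ)⁻¹) ^ s⁻¹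
  have hρ : 0 < ρ := by positivity
  have hρs : ρ ^ s = (2 * q : ℝ)⁻¹ := Real.rpow_inv_rpow (by positivity) hs.ne'
  filter_upwards [eventually_le_pow_of_liminf_eq_top hτ hρ] with n hn
  calc (q : ℝ≥0∞) ^ n * ENNReal.ofReal (ψ n) ^ s ≤ (q : ℝ≥0∞) ^ n * ENNReal.ofReal (ρ ^ n) ^ s := by
        gcongr
    _ = ENNReal.ofReal (q ^ n * (ρ ^ s) ^ n) := by
        rw [ENNReal.ofReal_rpow_of_nonneg (by positivity) hs.le, ← Real.rpow_natCast,
          ← Real.rpow_mul hρ.le, mul_comm (n : ℝ), Real.rpow_mul hρ.le, Real.rpow_natCast,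
          ENNReal.ofReal_mul (by positivity), ENNReal.ofReal_pow (Nat.cast_nonneg q),
          ENNReal.ofReal_natCast]
    _ = 2⁻¹ ^ n := by
        rw [hρs, ← mul_pow, mul_inv, ← mul_assoc, mul_comm (q : ℝ), mul_assoc,
          mul_inv_cancel₀ (by positivity), mul_one, ENNReal.ofReal_pow (by norm_num),
          ENNReal.ofReal_inv_of_pos two_pos, ENNReal.ofReal_ofNat]

/-- `W(T, ψ, {f_n})` is the `limsup` of these sets. -/
def shrinkingTarget {d : ℕ} (β : Fin d → ℝ) (f : ℕ → (Fin d → ℝ) → Fin d → ℝ) (ψ : ℕ → ℝ)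
    (n : ℕ) : Set (Fin d → ℝ) :=
  {x | (∀ i, x i ∈ Ico (0 : ℝ) 1) ∧ ∀ i, tdist ((betaT (β i))^[n] (x i)) (f n x i) < ψ n}

theorem ediam_shrinkingTarget_inter_betaCode_le {d : ℕ} {β : Fin d → ℝ} (hβ : ∀ i, 1 ≤ β i)
    {c : ℝ} (hc : 0 ≤ c) {f : ℕ → (Fin d → ℝ) → Fin d → ℝ}
    (hf : ∀ n : ℕ, ∀ x y : Fin d → ℝ, (∀ i, x i ∈ Ico (0 : ℝ) 1) →
      (∀ i, y i ∈ Ico (0 : ℝ) 1) → tdistVec (f n x) (f n y) ≤ c * tdistVec x y)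
    {ψ : ℕ → ℝ} (hψ : ∀ n, 0 ≤ ψ n) {n : ℕ} (hexp : ∀ i, 2 * c * √d ≤ β i ^ n)
    (σ : (Fin d → Fin n → ℕ) × (Fin d → ℕ)) :
    ediam {x ∈ shrinkingTarget β f ψ n | betaCode β n x = σ} ≤ ENNReal.ofReal (4 * ψ n) :=
  ediam_le fun x ⟨⟨hx, hxf⟩, hxσ⟩ y ⟨⟨hy, hyf⟩, hyσ⟩ => by
    rw [edist_dist]
    exact ENNReal.ofReal_le_ofReal <| dist_le_of_betaCode_eq hβ hc (hψ n) hexp (f n)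
      (hf n x y hx hy) hx hy (hxσ.trans hyσ.symm) hxf hyf

theorem hausdorffMeasure_limsup_shrinkingTarget {d : ℕ} {β : Fin d → ℝ} (hβ : ∀ i, 1 < β i)
    {c : ℝ} (hc : 0 ≤ c) {f : ℕ → (Fin d → ℝ) → Fin d → ℝ}
    (hf : ∀ n : ℕ, ∀ x y : Fin d → ℝ, (∀ i, x i ∈ Ico (0 : ℝ) 1) →
      (∀ i, y i ∈ Ico (0 : ℝ) 1) → tdistVec (f n x) (f n y) ≤ c * tdistVec x y)
    {ψ : ℕ → ℝ} (hψ : ∀ n, 0 ≤ ψ n)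
    (hτ : liminf (fun n : ℕ => ENNReal.ofReal (-Real.log (ψ n) / n)) atTop = ⊤) {s : ℝ}
    (hs : 0 < s) : μH[s] (limsup (shrinkingTarget β f ψ) atTop) = 0 := by
  set E : (n : ℕ) → (Fin d → Fin n → ℕ) × (Fin d → ℕ) → Set (Fin d → ℝ) :=
    fun n σ => {x ∈ shrinkingTarget β f ψ n | betaCode β n x = σ}
  set q := ∏ i, (⌊β i⌋₊ + 1)
  have hexp : ∀ᶠ n in atTop, ∀ i, 2 * c * √d ≤ β i ^ n := eventually_all.2 fun i =>
    (tendsto_pow_atTop_atTop_of_one_lt (hβ i)).eventually_ge_atTop _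
  refine hausdorffMeasure_limsup_eq_zero hs (t := fun n => (betaCodes β n).image (E n))
    (a := fun n => 2 ^ d * 4 ^ s * 2⁻¹ ^ n) (Eventually.of_forall fun n x hx => ?_) ?_ ?_
  · exact ⟨E n (betaCode β n x), Finset.mem_image_of_mem _
      (betaCode_mem_betaCodes (fun i => zero_le_one.trans (hβ i).le) hx.1 n), hx, rfl⟩
  · filter_upwards [hexp, eventually_pow_mul_rpow_le hτ (q := q) (by positivity) hs]
      with n hexp hψq
    calc ∑ F ∈ (betaCodes β n).image (E n), ediam F ^ s
        ≤ ∑ σ ∈ betaCodes β n, ediam (E n σ) ^ s :=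
          Finset.sum_image_le_of_nonneg fun _ _ => zero_le
      _ ≤ ∑ σ ∈ betaCodes β n, ENNReal.ofReal (4 * ψ n) ^ s := by
          gcongr with σ
          exact ediam_shrinkingTarget_inter_betaCode_le (fun i => (hβ i).le) hc hf hψ hexp σ
      _ = 2 ^ d * 4 ^ s * ((q : ℝ≥0∞) ^ n * ENNReal.ofReal (ψ n) ^ s) := by
          rw [Finset.sum_const, card_betaCodes, nsmul_eq_mul, ENNReal.ofReal_mul (by norm_num),
            ENNReal.mul_rpow_of_nonneg _ _ hs.le, ENNReal.ofReal_ofNat]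
          simp only [Nat.cast_mul, Nat.cast_pow, Nat.cast_ofNat]
          ring
      _ ≤ 2 ^ d * 4 ^ s * 2⁻¹ ^ n := by gcongr
  · rw [ENNReal.tsum_mul_left, ENNReal.tsum_geometric]
    exact ENNReal.mul_ne_top
      (ENNReal.mul_ne_top (by simp) (ENNReal.rpow_ne_top_of_nonneg hs.le (by simp))) (by simp)

theorem dimH_modified_shrinking_target_tau_infinite_general
    (d : ℕ) (β : Fin d → ℝ) (hβ : ∀ i, 1 < β i)
    (c : ℝ) (hc : 0 < c) (f : ℕ → (Fin d → ℝ) → (Fin d → ℝ))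
    (hf : ∀ n : ℕ, ∀ x y : Fin d → ℝ, (∀ i, x i ∈ Set.Ico (0 : ℝ) 1) →
      (∀ i, y i ∈ Set.Ico (0 : ℝ) 1) → tdistVec (f n x) (f n y) ≤ c * tdistVec x y)
    (ψ : ℕ → ℝ) (hψ : ∀ n, 0 < ψ n)
    (hτ : Filter.liminf (fun n : ℕ => ENNReal.ofReal (-Real.log (ψ n) / n)) atTop = ⊤) :
    dimH {x : Fin d → ℝ | (∀ i, x i ∈ Set.Ico (0 : ℝ) 1) ∧
        (∃ᶠ n in atTop, ∀ i, tdist ((betaT (β i))^[n] (x i)) (f n x i) < ψ n)} = 0 := by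
  refine dimH_eq_zero_of_hausdorffMeasure_eq_zero fun s hs => measure_mono_null ?_
    (hausdorffMeasure_limsup_shrinkingTarget hβ hc.le hf (fun n => (hψ n).le) hτ hs)
  exact fun x hx => mem_limsup_iff_frequently_mem.2 (hx.2.mono fun n hn => ⟨hx.1, hn⟩)

/-- **Degenerate case `τ = ∞`.** For `T = diag(β_1,…,β_d)` with `1 < β_1 ≤ ⋯ ≤ β_d`,
a uniformly Lipschitz sequence of maps `f_n : 𝕋^d → 𝕋^d` and `ψ : ℕ → (0,∞)` with
`liminf (-log ψ(n))/n = ∞`, the set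
`W(T,ψ,{f_n}) = {x ∈ 𝕋^d : |T_{β_i}^n(x_i) - f_n^{(i)}(x)| < ψ(n) (1 ≤ i ≤ d) for i.m. n}`
has Hausdorff dimension `0`. -/
theorem dimH_modified_shrinking_target_tau_infinite
    (d : ℕ) (hd : 1 ≤ d) (β : Fin d → ℝ) (hβ : ∀ i, 1 < β i) (hmono : Monotone β)
    (c : ℝ) (hc : 0 < c) (f : ℕ → (Fin d → ℝ) → (Fin d → ℝ))
    (hf : ∀ n : ℕ, ∀ x y : Fin d → ℝ, (∀ i, x i ∈ Set.Ico (0 : ℝ) 1) →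
      (∀ i, y i ∈ Set.Ico (0 : ℝ) 1) → tdistVec (f n x) (f n y) ≤ c * tdistVec x y)
    (ψ : ℕ → ℝ) (hψ : ∀ n, 0 < ψ n)
    (hτ : Filter.liminf (fun n : ℕ => ENNReal.ofReal (-Real.log (ψ n) / n)) atTop = ⊤) :
    dimH {x : Fin d → ℝ | (∀ i, x i ∈ Set.Ico (0 : ℝ) 1) ∧
        (∃ᶠ n in atTop, ∀ i, tdist ((betaT (β i))^[n] (x i)) (f n x i) < ψ n)} = 0 :=
  dimH_modified_shrinking_target_tau_infinite_general d β hβ c hc f hf ψ hψ hτ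
end

section
/- Let 1 < β_1 ≤ β_2 ≤ … ≤ β_d be fixed real numbers. For 1 ≤ i ≤ d and t ≥ 0 define λ_i(t) := #{1 ≤ j ≤ d : log β_j > log β_i + t} + #{1 ≤ j ≤ d : β_j ≤ β_i} · (log β_i)/(log β_i + t) + Σ_{j : β_i < β_j ≤ β_i e^t} (log β_j)/(log β_i + t). Then for each i, the function t ↦ λ_i(t) is non-increasing on [0,∞). -/
/-!
Writing `a = log β_i` and `s = a + t`, the `j`-th index contributes `1`, `a / s` or
`log β_j / s` according to whether `log β_j` lies above `s`, below `a`, or in between; in each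
case this is `min (max a (log β_j)) s / s`, the clamp of `log β_j` to `[a, s]` divided by `s`.
For `m = max a (log β_j) ≥ 0` the map `x ↦ min m x / x = min (m / x) 1` is antitone on
`x > 0`, so every summand is non-increasing in `t`.
-/

open scoped Classical

open Finset Real

lemma antitoneOn_min_div_self {m : ℝ} (hm : 0 ≤ m) :
    AntitoneOn (fun x : ℝ => min m x / x) (Set.Ioi 0) := by
  intro x hx y hy hxy
  have hx : 0 < x := hx
  have hy : 0 < y := hy
  simp only
  rw [← min_div_div_right hx.le, ← min_div_div_right hy.le, div_self hx.ne', div_self hy.ne']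
  exact min_le_min_right 1 (div_le_div_of_nonneg_left hm hx hxy)

lemma antitoneOn_min_max_div_add {a : ℝ} (ha : 0 < a) (b : ℝ) :
    AntitoneOn (fun t => min (max a b) (a + t) / (a + t)) (Set.Ici 0) :=
  (antitoneOn_min_div_self (ha.le.trans (le_max_left a b))).comp_MonotoneOn
    ((monotone_id.const_add a).monotoneOn _) fun t (ht : 0 ≤ t) => by
      change 0 < a + t
      linarith

lemma ite_add_ite_add_ite_eq_min_max_div {a b s : ℝ} (has : a ≤ s) (hs : s ≠ 0) :
    ((if s < b then 1 else 0) + (if b ≤ a then a / s else 0)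
      + if a < b ∧ b ≤ s then b / s else 0) = min (max a b) s / s := by
  rcases lt_or_ge s b with hsb | hbs
  · rw [if_pos hsb, if_neg (by linarith : ¬ b ≤ a), if_neg fun h => by linarith [h.2],
      min_eq_right (le_max_of_le_right hsb.le), div_self hs]
    ring
  · rcases le_or_gt b a with hba | hab
    · rw [if_neg hbs.not_gt, if_pos hba, if_neg fun h => by linarith [h.1], max_eq_left hba,
        min_eq_left has]
      ring
    · rw [if_neg hbs.not_gt, if_neg hab.not_ge, if_pos ⟨hab, hbs⟩, max_eq_right hab.le,
        min_eq_left hbs]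
      ring

lemma card_add_card_mul_add_sum_eq_sum_min_max_div {ι : Type*} [Fintype ι] (b : ι → ℝ)
    {a s : ℝ} (has : a ≤ s) (hs : s ≠ 0) :
    (#{j | s < b j} : ℝ) + #{j | b j ≤ a} * (a / s) + ∑ j with a < b j ∧ b j ≤ s, b j / s
      = ∑ j, min (max a (b j)) s / s := by
  rw [natCast_card_filter, natCast_card_filter, sum_mul, sum_filter, ← sum_add_distrib,
    ← sum_add_distrib]
  refine sum_congr rfl fun j _ => ?_
  rw [ite_mul, one_mul, zero_mul, ite_add_ite_add_ite_eq_min_max_div has hs]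

theorem lam_antitoneOn_general
    (d : ℕ) (β : Fin d → ℝ) (hβ : ∀ i, 1 < β i) (i : Fin d) :
    AntitoneOn (fun t : ℝ =>
      ((Finset.univ.filter fun j : Fin d => Real.log (β i) + t < Real.log (β j)).card : ℝ)
      + ((Finset.univ.filter fun j : Fin d => β j ≤ β i).card : ℝ) *
          (Real.log (β i) / (Real.log (β i) + t))
      + ∑ j ∈ Finset.univ.filter (fun j : Fin d => β i < β j ∧ β j ≤ β i * Real.exp t),
          Real.log (β j) / (Real.log (β i) + t)) (Set.Ici (0 : ℝ)) := by
  have hpos : ∀ j, 0 < β j := fun j => one_pos.trans (hβ j)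
  have ha : 0 < log (β i) := log_pos (hβ i)
  refine AntitoneOn.congr (f₁ := fun t => ∑ j,
      min (max (log (β i)) (log (β j))) (log (β i) + t) / (log (β i) + t))
    (fun s hs t ht hst => sum_le_sum fun j _ => antitoneOn_min_max_div_add ha _ hs ht hst) ?_
  intro t (ht : 0 ≤ t)
  have h_le : ∀ j, β j ≤ β i ↔ log (β j) ≤ log (β i) := fun j =>
    (log_le_log_iff (hpos j) (hpos i)).symm
  have h_between : ∀ j, β i < β j ∧ β j ≤ β i * exp t ↔
      log (β i) < log (β j) ∧ log (β j) ≤ log (β i) + t := fun j => by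
    rw [log_lt_log_iff (hpos i) (hpos j), log_le_iff_le_exp (hpos j), exp_add, exp_log (hpos i)]
  dsimp only
  rw [filter_congr fun j _ => h_le j, filter_congr fun j _ => h_between j,
    card_add_card_mul_add_sum_eq_sum_min_max_div (fun j => log (β j)) (by linarith) (by linarith)]

/-- **Monotonicity of `λ_i`.** For fixed `1 < β_1 ≤ ⋯ ≤ β_d` and each `i`, the function
`t ↦ #{j : log β_j > log β_i + t} + #{j : β_j ≤ β_i} · log β_i/(log β_i + t)
   + Σ_{j : β_i < β_j ≤ β_i e^t} log β_j/(log β_i + t)`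
is non-increasing on `[0,∞)`. -/
theorem lam_antitoneOn
    (d : ℕ) (β : Fin d → ℝ) (hβ : ∀ i, 1 < β i) (hmono : Monotone β) (i : Fin d) :
    AntitoneOn (fun t : ℝ =>
      ((Finset.univ.filter fun j : Fin d => Real.log (β i) + t < Real.log (β j)).card : ℝ)
      + ((Finset.univ.filter fun j : Fin d => β j ≤ β i).card : ℝ) *
          (Real.log (β i) / (Real.log (β i) + t))
      + ∑ j ∈ Finset.univ.filter (fun j : Fin d => β i < β j ∧ β j ≤ β i * Real.exp t),
          Real.log (β j) / (Real.log (β i) + t)) (Set.Ici (0 : ℝ)) :=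
  lam_antitoneOn_general d β hβ i
end

section
/- Let β > 1 and let n ≥ 1 satisfy β^n ≥ 2. Let w be an admissible word of length n and let 0 ≤ δ_1 < δ_2. Then the set E_{n,β}(w, δ_1, δ_2) := {x ∈ I_{n,β}(w) : δ_1 ≤ |T_β^n(x) − x| ≤ δ_2}, where T_β^n(x) − x is the difference of real numbers in [0,1) and |·| is the absolute value, can be covered by 4 intervals each of length (δ_2 − δ_1)β^{−n}. (On each cylinder of order n, x ↦ T_β^n(x) − x is an affine map of slope β^n − 1.) -/
/-- The cylinder of order `n` (with respect to base `β`) determined by the word `w`: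
`I_{n,β}(w) = {x ∈ [0,1) : ε_i(x,β) = w_i, 1 ≤ i ≤ n}`. -/
noncomputable def cylinder (β : ℝ) (n : ℕ) (w : Fin n → ℤ) : Set ℝ :=
  {x | x ∈ Set.Ico (0 : ℝ) 1 ∧ ∀ i : Fin n, ⌊β * (betaT β)^[(i : ℕ)] x⌋ = w i}

open Set

lemma pow_mul_sub_betaT_iterate (β x : ℝ) (k : ℕ) :
    β ^ k * x - (betaT β)^[k] x =
      ∑ i ∈ Finset.range k, β ^ (k - 1 - i) * ⌊β * (betaT β)^[i] x⌋ := by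
  induction k with
  | zero => simp
  | succ k ih =>
    have hstep : β ^ (k + 1) * x - (betaT β)^[k + 1] x =
        β * (β ^ k * x - (betaT β)^[k] x) + ⌊β * (betaT β)^[k] x⌋ := by
      rw [Function.iterate_succ_apply', betaT, ← Int.self_sub_fract]
      ring
    rw [hstep, ih, Finset.sum_range_succ, Finset.mul_sum, Nat.add_sub_cancel, Nat.sub_self,
      pow_zero, one_mul]
    congr 1
    refine Finset.sum_congr rfl fun i hi => ?_
    rw [← mul_assoc, ← pow_succ']
    congr 2
    have := Finset.mem_range.mp hi
    omega

lemma betaT_iterate_sub_self_of_mem_cylinder {β x : ℝ} {n : ℕ} {w : Fin n → ℤ}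
    (hx : x ∈ cylinder β n w) :
    (betaT β)^[n] x - x = (β ^ n - 1) * x - ∑ i : Fin n, β ^ (n - 1 - i) * w i := by
  have hsum := pow_mul_sub_betaT_iterate β x n
  rw [← Fin.sum_univ_eq_sum_range (fun i => β ^ (n - 1 - i) * ⌊β * (betaT β)^[i] x⌋)] at hsum
  simp only [hx.2] at hsum
  linarith

lemma mem_Icc_or_mem_Icc_of_abs_mul_sub_mem_Icc {s c x δ₁ δ₂ : ℝ} (hs : 0 < s)
    (h₁ : δ₁ ≤ |s * x - c|) (h₂ : |s * x - c| ≤ δ₂) :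
    x ∈ Icc ((c + δ₁) / s) ((c + δ₂) / s) ∨ x ∈ Icc ((c - δ₂) / s) ((c - δ₁) / s) := by
  simp only [mem_Icc, div_le_iff₀ hs, le_div_iff₀ hs]
  rcases le_or_gt 0 (s * x - c) with hpos | hneg
  · rw [abs_of_nonneg hpos] at h₁ h₂
    left; constructor <;> linarith
  · rw [abs_of_neg hneg] at h₁ h₂
    right; constructor <;> linarith

lemma div_sub_one_le_two_mul_mul_inv {t d : ℝ} (ht : 2 ≤ t) (hd : 0 ≤ d) :
    d / (t - 1) ≤ 2 * (d * t⁻¹) := by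
  calc d / (t - 1) ≤ d / (t / 2) := div_le_div_of_nonneg_left hd (by positivity) (by linarith)
    _ = 2 * (d * t⁻¹) := by ring

lemma mem_Icc_or_mem_Icc_of_mem_Icc_add_two_mul {a b x L : ℝ} (hx : x ∈ Icc a b)
    (hb : b ≤ a + 2 * L) :
    x ∈ Icc a (a + L) ∨ x ∈ Icc (a + L) (a + L + L) := by
  rcases le_or_gt x (a + L) with h | h
  · exact Or.inl ⟨hx.1, h⟩
  · exact Or.inr ⟨h.le, by linarith [hx.2]⟩

theorem cover_E_by_four_intervals_general
    (β : ℝ) (n : ℕ) (hn2 : 2 ≤ β ^ n)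
    (w : Fin n → ℤ)
    (δ₁ δ₂ : ℝ) (hδ : δ₁ < δ₂) :
    ∃ a : Fin 4 → ℝ,
      {x ∈ cylinder β n w | δ₁ ≤ |(betaT β)^[n] x - x| ∧ |(betaT β)^[n] x - x| ≤ δ₂} ⊆
        ⋃ k : Fin 4, Set.Icc (a k) (a k + (δ₂ - δ₁) * (β ^ n)⁻¹) := by
  set s := β ^ n - 1
  set c := ∑ i : Fin n, β ^ (n - 1 - i) * (w i : ℝ)
  set L := (δ₂ - δ₁) * (β ^ n)⁻¹
  have hs : 0 < s := by linarith
  have hlen : (δ₂ - δ₁) / s ≤ 2 * L := div_sub_one_le_two_mul_mul_inv hn2 (by linarith)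
  refine ⟨![(c + δ₁) / s, (c + δ₁) / s + L, (c - δ₂) / s, (c - δ₂) / s + L], ?_⟩
  rintro x ⟨hx, h₁, h₂⟩
  rw [betaT_iterate_sub_self_of_mem_cylinder hx] at h₁ h₂
  simp only [mem_iUnion]
  rcases mem_Icc_or_mem_Icc_of_abs_mul_sub_mem_Icc hs h₁ h₂ with hI | hI
  · rcases mem_Icc_or_mem_Icc_of_mem_Icc_add_two_mul hI (L := L)
      (by rw [show (c + δ₂) / s = (c + δ₁) / s + (δ₂ - δ₁) / s by ring]; linarith) with h | h
    exacts [⟨0, h⟩, ⟨1, h⟩]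
  · rcases mem_Icc_or_mem_Icc_of_mem_Icc_add_two_mul hI (L := L)
      (by rw [show (c - δ₁) / s = (c - δ₂) / s + (δ₂ - δ₁) / s by ring]; linarith) with h | h
    exacts [⟨2, h⟩, ⟨3, h⟩]

/-- **Lemma 3.1.** Let `β > 1` and `n ≥ 1` with `β^n ≥ 2`. For any admissible word `w` of
length `n` and any `0 ≤ δ₁ < δ₂`, the set
`E_{n,β}(w,δ₁,δ₂) = {x ∈ I_{n,β}(w) : δ₁ ≤ |T_β^n(x) - x| ≤ δ₂}`
can be covered by `4` intervals of length `(δ₂ - δ₁) β^{-n}`. -/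
theorem cover_E_by_four_intervals
    (β : ℝ) (hβ : 1 < β) (n : ℕ) (hn : 1 ≤ n) (hn2 : 2 ≤ β ^ n)
    (w : Fin n → ℤ) (hw : (cylinder β n w).Nonempty)
    (δ₁ δ₂ : ℝ) (hδ₁ : 0 ≤ δ₁) (hδ : δ₁ < δ₂) :
    ∃ a : Fin 4 → ℝ,
      {x ∈ cylinder β n w | δ₁ ≤ |(betaT β)^[n] x - x| ∧ |(betaT β)^[n] x - x| ≤ δ₂} ⊆
        ⋃ k : Fin 4, Set.Icc (a k) (a k + (δ₂ - δ₁) * (β ^ n)⁻¹) :=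
  cover_E_by_four_intervals_general β n hn2 w δ₁ δ₂ hδ
end

section
/- Let d ≥ 1 and let s ∈ (d−1, d). There exists a constant C = C(d,s) > 0 such that for all sufficiently small δ > 0, the set H_d(δ) := {y = (y_1,…,y_d) ∈ [0,1]^d : ∏_{i=1}^d y_i ≤ δ} admits a finite cover ℬ by axis-parallel d-dimensional cubes such that Σ_{B ∈ ℬ} |B|^s ≤ C · δ^{s−d+1}, where |B| denotes the side length of the cube B. -/
open Finset

namespace HyperboloidCoverAux

lemma exists_sum_eq_of_le {d : ℕ} (J : ℕ) (k : Fin d → ℕ) (h : J ≤ ∑ i, k i) :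
    ∃ j : Fin d → ℕ, (∀ i, j i ≤ k i) ∧ ∑ i, j i = J := by
  obtain ⟨N, hN⟩ : ∃ N, ∑ i, k i = N := ⟨_, rfl⟩
  induction N generalizing k with
  | zero => exact ⟨k, fun i => le_rfl, by omega⟩
  | succ N ih =>
    rcases Nat.lt_or_ge J (N + 1) with hJ | hJ
    · have hpos : ∑ i, k i ≠ 0 := by omega
      obtain ⟨i, _, hi⟩ := Finset.exists_ne_zero_of_sum_ne_zero hpos
      have hupd : ∑ i', Function.update k i (k i - 1) i' = N := by
        rw [Finset.sum_update_of_mem (Finset.mem_univ i),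
          Finset.sdiff_singleton_eq_erase]
        have := Finset.add_sum_erase Finset.univ k (Finset.mem_univ i)
        omega
      obtain ⟨j, hj1, hj2⟩ := ih (Function.update k i (k i - 1)) (by omega) hupd
      refine ⟨j, fun i' => ?_, hj2⟩
      rcases eq_or_ne i' i with rfl | hne
      · have := hj1 i'; rw [Function.update_self] at this; omega
      · have := hj1 i'; rwa [Function.update_of_ne hne] at this
    · exact ⟨k, fun i => le_rfl, by omega⟩

lemma exists_dyadic_bound {d J : ℕ} (hd : 1 ≤ d) (y : Fin d → ℝ)
    (hy1 : ∀ i, y i ≤ 1)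
    (hprod : ∏ i, y i ≤ (1/2:ℝ) ^ (J + d)) :
    ∃ j : Fin d → ℕ, (∀ i, j i ≤ J) ∧ ∑ i, j i = J ∧ ∀ i, y i ≤ (1/2:ℝ) ^ (j i) := by
  set F : Fin d → Finset ℕ :=
    fun i => (Finset.range (J+1)).filter (fun n => y i ≤ (1/2:ℝ)^n) with hF
  have hne : ∀ i, (F i).Nonempty := by
    intro i
    exact ⟨0, by simp [hF, hy1 i]⟩
  set k : Fin d → ℕ := fun i => (F i).max' (hne i) with hk
  have hkmem : ∀ i, k i ∈ F i := fun i => (F i).max'_mem (hne i)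
  have hkJ : ∀ i, k i ≤ J := by
    intro i
    have := hkmem i
    simp only [hF, Finset.mem_filter, Finset.mem_range] at this
    omega
  have hky : ∀ i, y i ≤ (1/2:ℝ) ^ (k i) := by
    intro i
    have := hkmem i
    simp only [hF, Finset.mem_filter] at this
    exact this.2
  have hsum : J ≤ ∑ i, k i := by
    by_contra hcon
    push_neg at hcon
    have hlt : ∀ i, k i < J := by
      intro i
      calc k i ≤ ∑ i', k i' := Finset.single_le_sum (fun _ _ => Nat.zero_le _) (mem_univ i)
      _ < J := hcon
    have hstrict : ∀ i, (1/2:ℝ) ^ (k i + 1) < y i := by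
      intro i
      by_contra hle
      push_neg at hle
      have hmemF : k i + 1 ∈ F i := by
        simp only [hF, Finset.mem_filter, Finset.mem_range]
        exact ⟨by have := hlt i; omega, hle⟩
      have h2 : k i + 1 ≤ k i := Finset.le_max' (F i) _ hmemF
      omega
    have hprodlt : ∏ i, (1/2:ℝ) ^ (k i + 1) < ∏ i, y i := by
      refine Finset.prod_lt_prod_of_nonempty (fun i _ => by positivity) (fun i _ => hstrict i) ?_
      exact univ_nonempty_iff.mpr ⟨⟨0, hd⟩⟩
    have hprodeq : ∏ i, (1/2:ℝ) ^ (k i + 1) = (1/2:ℝ) ^ (∑ i, (k i + 1)) :=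
      Finset.prod_pow_eq_pow_sum _ _ _
    have hsum2 : ∑ i, (k i + 1) ≤ J - 1 + d := by
      rw [Finset.sum_add_distrib]
      simp only [Finset.sum_const, card_univ, Fintype.card_fin, smul_eq_mul, mul_one]
      omega
    have hmono : (1/2:ℝ) ^ (J + d) < (1/2:ℝ) ^ (∑ i, (k i + 1)) := by
      apply pow_lt_pow_right_of_lt_one₀ (by norm_num) (by norm_num)
      omega
    rw [hprodeq] at hprodlt
    linarith
  obtain ⟨j, hj1, hj2⟩ := exists_sum_eq_of_le J k hsum
  refine ⟨j, fun i => le_trans (hj1 i) (hkJ i), hj2, fun i => le_trans (hky i) ?_⟩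
  exact pow_le_pow_of_le_one (by norm_num) (by norm_num) (hj1 i)

abbrev Sty (d J : ℕ) := {j : Fin d → Fin (J+1) // ∑ i', (j i' : ℕ) = J}

def Msup {d J : ℕ} (j : Fin d → Fin (J+1)) : ℕ := Finset.univ.sup fun i : Fin d => (j i : ℕ)

abbrev Tty (d J : ℕ) := (j : Sty d J) × ((i : Fin d) → Fin (2 ^ (Msup j.1 - (j.1 i : ℕ))))

lemma fiber_card_le {d J m : ℕ} (hm : m ≤ J) (i : Fin d) :
    (Finset.univ.filter (fun j : Sty d J => (j.1 i : ℕ) = m)).card ≤ (J + 1 - m) ^ d := by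
  classical
  have hpos : 0 < J + 1 - m := by omega
  have key : ∀ j : Sty d J,
      (j.1 i : ℕ) = m → ∀ k, k ≠ i → (j.1 k : ℕ) ≤ J - m := by
    intro j hji k hk
    have hsub : ({k, i} : Finset (Fin d)) ⊆ Finset.univ := Finset.subset_univ _
    have := Finset.sum_le_sum_of_subset (f := fun i' => (j.1 i' : ℕ)) hsub
    rw [Finset.sum_pair hk, j.2] at this
    omega
  have hle := Finset.card_le_card_of_injOn
    (f := fun j : Sty d J =>
      fun k => if k = i then (⟨0, hpos⟩ : Fin (J + 1 - m))
        else ⟨min (j.1 k : ℕ) (J - m), by omega⟩)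
    (s := Finset.univ.filter (fun j : Sty d J => (j.1 i : ℕ) = m))
    (t := (Finset.univ : Finset (Fin d → Fin (J + 1 - m))))
    (fun _ _ => Finset.mem_univ _)
    (by
      intro j hj j' hj' heq
      simp only [Finset.mem_coe, Finset.mem_filter, Finset.mem_univ, true_and] at hj hj'
      ext k
      rcases eq_or_ne k i with rfl | hk
      · rw [hj, hj']
      · have h1 := congrFun heq k
        simp only [if_neg hk] at h1
        have h2 : min (j.1 k : ℕ) (J - m) = min (j'.1 k : ℕ) (J - m) := congrArg Fin.val h1
        have h3 := key j hj k hk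
        have h4 := key j' hj' k hk
        omega)
  calc (Finset.univ.filter (fun j : Sty d J => (j.1 i : ℕ) = m)).card
      ≤ (Finset.univ : Finset (Fin d → Fin (J + 1 - m))).card := hle
    _ = (J + 1 - m) ^ d := by simp [Finset.card_univ]

lemma partial_sum_le {d : ℕ} (hd : 1 ≤ d) {x : ℝ} (hx0 : 0 < x) (hx1 : x < 1) (K : ℕ) :
    ∑ u ∈ Finset.range K, ((u : ℝ) + 1) ^ d * x ^ u
      ≤ x⁻¹ * (∑' n : ℕ, (n : ℝ) ^ d * x ^ n + 1) := by
  have hsum : Summable (fun n : ℕ => (n : ℝ) ^ d * x ^ n) :=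
    summable_pow_mul_geometric_of_norm_lt_one d
      (by rw [Real.norm_eq_abs, abs_of_pos hx0]; exact hx1)
  set f : ℕ → ℝ := fun n : ℕ => (n : ℝ) ^ d * x ^ n with hf
  set g : ℕ → ℝ := fun n : ℕ => f (n + 1) with hg
  have hterm : ∀ u : ℕ, ((u : ℝ) + 1) ^ d * x ^ u = x⁻¹ * g u := by
    intro u
    simp only [hg, hf]
    push_cast
    rw [pow_succ]
    field_simp
  have hshift : Summable g := (summable_nat_add_iff 1).2 hsum
  have h1 : ∑ u ∈ Finset.range K, g u ≤ ∑' n : ℕ, g n :=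
    Summable.sum_le_tsum _ (fun u _ => by simp only [hg, hf]; positivity) hshift
  have h2 : (∑' n : ℕ, g n) ≤ ∑' n : ℕ, f n := by
    have h0 := Summable.tsum_eq_zero_add hsum
    have hz : f 0 = 0 := by simp [hf, zero_pow (by omega : d ≠ 0)]
    rw [h0, hz, zero_add]
  calc ∑ u ∈ Finset.range K, ((u : ℝ) + 1) ^ d * x ^ u
      = x⁻¹ * ∑ u ∈ Finset.range K, g u := by
        rw [Finset.mul_sum]; exact Finset.sum_congr rfl fun u _ => hterm u
    _ ≤ x⁻¹ * (∑' n : ℕ, f n + 1) := by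
        apply mul_le_mul_of_nonneg_left _ (by positivity)
        linarith [h1.trans h2]

lemma sum_over_S_le {d J : ℕ} (hd : 1 ≤ d) (i : Fin d) {r : ℝ} (hr : 1 < r) :
    ∑ j : Sty d J, r ^ (j.1 i : ℕ)
      ≤ r ^ J * (r * (∑' n : ℕ, (n : ℝ) ^ d * (r⁻¹) ^ n + 1)) := by
  classical
  have hr0 : (0:ℝ) < r := lt_trans one_pos hr
  have step1 : ∑ j : Sty d J, r ^ (j.1 i : ℕ)
      ≤ ∑ m ∈ Finset.range (J+1), ((J + 1 - m : ℕ) : ℝ) ^ d * r ^ m := by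
    rw [← Finset.sum_fiberwise_of_maps_to
      (g := fun j : Sty d J => (j.1 i : ℕ))
      (t := Finset.range (J+1))
      (fun j _ => Finset.mem_range.mpr (j.1 i).isLt)
      (f := fun j => r ^ (j.1 i : ℕ))]
    apply Finset.sum_le_sum
    intro m hm
    have hmJ : m ≤ J := by have := Finset.mem_range.mp hm; omega
    have heq : ∑ j ∈ Finset.univ.filter (fun j : Sty d J => (j.1 i : ℕ) = m),
        r ^ (j.1 i : ℕ)
        = (Finset.univ.filter (fun j : Sty d J => (j.1 i : ℕ) = m)).card * r ^ m := by
      rw [Finset.sum_congr rfl (fun j hj => by rw [(Finset.mem_filter.mp hj).2])]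
      rw [Finset.sum_const, nsmul_eq_mul]
    rw [heq]
    apply mul_le_mul_of_nonneg_right _ (by positivity)
    calc ((Finset.univ.filter (fun j : Sty d J => (j.1 i : ℕ) = m)).card : ℝ)
        ≤ (((J + 1 - m) ^ d : ℕ) : ℝ) := by exact_mod_cast fiber_card_le hmJ i
      _ = ((J + 1 - m : ℕ) : ℝ) ^ d := by push_cast; ring
  have step2 : ∑ m ∈ Finset.range (J+1), ((J + 1 - m : ℕ) : ℝ) ^ d * r ^ m
      ≤ r ^ J * (r * (∑' n : ℕ, (n : ℝ) ^ d * (r⁻¹) ^ n + 1)) := by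
    rw [← Finset.sum_range_reflect]
    have hterm : ∀ u ∈ Finset.range (J + 1),
        ((J + 1 - (J + 1 - 1 - u) : ℕ) : ℝ) ^ d * r ^ (J + 1 - 1 - u)
          = r ^ J * (((u : ℝ) + 1) ^ d * (r⁻¹) ^ u) := by
      intro u hu
      have huJ : u ≤ J := by have := Finset.mem_range.mp hu; omega
      have h1 : (J + 1 - (J + 1 - 1 - u) : ℕ) = u + 1 := by omega
      have h2 : (J + 1 - 1 - u : ℕ) = J - u := by omega
      rw [h1, h2, pow_sub₀ r (ne_of_gt hr0) huJ]
      push_cast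
      rw [← inv_pow]
      ring
    rw [Finset.sum_congr rfl hterm, ← Finset.mul_sum]
    apply mul_le_mul_of_nonneg_left _ (by positivity)
    have hx0 : (0:ℝ) < r⁻¹ := by positivity
    have hx1 : r⁻¹ < 1 := by rw [inv_lt_one_iff₀]; right; exact hr
    have := partial_sum_le hd hx0 hx1 (J + 1)
    rwa [inv_inv] at this
  exact step1.trans step2

end HyperboloidCoverAux

open HyperboloidCoverAux in
/-- **Covering lemma for the hyperboloid region (Bovey–Dodson).** Let `d ≥ 1` and
`s ∈ (d-1, d)`. There is a constant `C > 0` such that for all sufficiently small `δ > 0`,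
the set `H_d(δ) = {y ∈ [0,1]^d : ∏ y_i ≤ δ}` admits a finite cover by axis-parallel
`d`-dimensional cubes (with corners `a k` and side lengths `l k`) satisfying
`Σ_B |B|^s ≤ C δ^{s-d+1}`. -/
theorem hyperboloid_cover
    (d : ℕ) (hd : 1 ≤ d) (s : ℝ) (hs : (d : ℝ) - 1 < s) (hs' : s < d) :
    ∃ C > (0 : ℝ), ∃ δ₀ > (0 : ℝ), ∀ δ : ℝ, 0 < δ → δ < δ₀ →
      ∃ (m : ℕ) (a : Fin m → Fin d → ℝ) (l : Fin m → ℝ),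
        (∀ k, 0 ≤ l k) ∧
        {y : Fin d → ℝ | (∀ i, y i ∈ Set.Icc (0 : ℝ) 1) ∧ ∏ i, y i ≤ δ} ⊆
          (⋃ k : Fin m, {y : Fin d → ℝ | ∀ i, y i ∈ Set.Icc (a k i) (a k i + l k)}) ∧
        ∑ k : Fin m, l k ^ s ≤ C * δ ^ (s - d + 1) := by
  classical
  set r : ℝ := (2:ℝ) ^ ((d:ℝ) - s) with hrdef
  have hr1 : 1 < r := by
    rw [hrdef]
    apply Real.one_lt_rpow_iff_of_pos (by norm_num) |>.mpr
    left
    exact ⟨by norm_num, by linarith⟩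
  have hr0 : (0:ℝ) < r := lt_trans one_pos hr1
  set T : ℝ := ∑' n : ℕ, (n : ℝ) ^ d * (r⁻¹) ^ n with hTdef
  have hT0 : 0 ≤ T := tsum_nonneg (fun n => by positivity)
  set D : ℝ := r * (T + 1) with hDdef
  have hD0 : 0 < D := by positivity
  clear_value T D
  have hdpos : (0:ℝ) < d := by exact_mod_cast hd
  refine ⟨d * D * 2 ^ (d + 1),
    mul_pos (mul_pos hdpos hD0) (by positivity), (1/2:ℝ) ^ (d + 1), by positivity, ?_⟩
  intro δ hδ hδ'
  have hJex : ∃ J : ℕ, δ ≤ (1/2:ℝ)^(J+d) ∧ (1/2:ℝ)^J < 2^(d+1)*δ := by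
    set X : ℝ := (1/2:ℝ) ^ d / δ with hXdef
    have hX2 : 2 < X := by
      rw [hXdef, lt_div_iff₀ hδ]
      calc 2 * δ < 2 * (1/2:ℝ) ^ (d+1) := by linarith
        _ = (1/2:ℝ)^d := by rw [pow_succ]; ring
    set nn : ℕ := ⌊X⌋₊ with hnndef
    have hnn2 : 2 ≤ nn := Nat.le_floor (by exact_mod_cast hX2.le)
    refine ⟨Nat.log 2 nn, ?_, ?_⟩
    · have h1 : (2:ℕ) ^ Nat.log 2 nn ≤ nn := Nat.pow_log_le_self 2 (by omega)
      have hJ1 : (2:ℝ) ^ Nat.log 2 nn ≤ X := by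
        calc (2:ℝ) ^ Nat.log 2 nn = ((2 ^ Nat.log 2 nn : ℕ) : ℝ) := by push_cast; ring
          _ ≤ (nn : ℝ) := by exact_mod_cast h1
          _ ≤ X := Nat.floor_le (by positivity)
      have h2 : (2:ℝ) ^ Nat.log 2 nn * δ ≤ (1/2:ℝ)^d := by
        rw [hXdef, le_div_iff₀ hδ] at hJ1
        exact hJ1
      have hhalf : (1/2:ℝ) ^ Nat.log 2 nn * (2:ℝ) ^ Nat.log 2 nn = 1 := by
        rw [← mul_pow]; norm_num
      calc δ = (1/2:ℝ) ^ Nat.log 2 nn * ((2:ℝ) ^ Nat.log 2 nn * δ) := by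
            rw [← mul_assoc, hhalf, one_mul]
        _ ≤ (1/2:ℝ) ^ Nat.log 2 nn * (1/2:ℝ)^d := mul_le_mul_of_nonneg_left h2 (by positivity)
        _ = (1/2:ℝ)^(Nat.log 2 nn + d) := (pow_add _ _ _).symm
    · have h1 : nn < 2 ^ (Nat.log 2 nn + 1) := Nat.lt_pow_succ_log_self (by norm_num) nn
      have hJ2 : X < (2:ℝ) ^ (Nat.log 2 nn + 1) := by
        have h2 : (nn : ℝ) + 1 ≤ ((2:ℕ) ^ (Nat.log 2 nn + 1) : ℝ) := by exact_mod_cast h1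
        calc X < (nn : ℝ) + 1 := Nat.lt_floor_add_one X
          _ ≤ ((2:ℕ) ^ (Nat.log 2 nn + 1) : ℝ) := h2
          _ = (2:ℝ) ^ (Nat.log 2 nn + 1) := by push_cast; ring
      have h3 : (1/2:ℝ)^d < (2:ℝ) ^ (Nat.log 2 nn + 1) * δ := by
        rw [hXdef, div_lt_iff₀ hδ] at hJ2
        exact hJ2
      have h4 : (1:ℝ) < (2:ℝ) ^ (Nat.log 2 nn + 1) * δ * (2:ℝ)^d := by
        have e1 : (1/2:ℝ)^d * (2:ℝ)^d = 1 := by rw [← mul_pow]; norm_num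
        calc (1:ℝ) = (1/2:ℝ)^d * (2:ℝ)^d := e1.symm
          _ < ((2:ℝ) ^ (Nat.log 2 nn + 1) * δ) * (2:ℝ)^d :=
            mul_lt_mul_of_pos_right h3 (by positivity)
          _ = (2:ℝ) ^ (Nat.log 2 nn + 1) * δ * (2:ℝ)^d := by ring
      rw [one_div_pow, div_lt_iff₀ (by positivity : (0:ℝ) < (2:ℝ) ^ Nat.log 2 nn)]
      calc (1:ℝ) < (2:ℝ) ^ (Nat.log 2 nn + 1) * δ * (2:ℝ)^d := h4
        _ = 2^(d+1) * δ * 2 ^ Nat.log 2 nn := by ring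
  obtain ⟨J, hδJ, hw⟩ := hJex
  obtain ⟨m, ⟨e⟩⟩ : ∃ m : ℕ, Nonempty (Tty d J ≃ Fin m) := ⟨_, ⟨Fintype.equivFin _⟩⟩
  refine ⟨m,
    fun k i => (((e.symm k).2 i : ℕ) : ℝ) * (1/2:ℝ) ^ (Msup (e.symm k).1.1),
    fun k => (1/2:ℝ) ^ (Msup (e.symm k).1.1),
    fun k => by positivity, ?_, ?_⟩
  · -- covering
    intro y hy
    obtain ⟨hy01, hyprod⟩ := hy
    obtain ⟨j', hj'J, hj'sum, hj'y⟩ := exists_dyadic_bound hd y (fun i => (hy01 i).2)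
      (hyprod.trans hδJ)
    set jf : Fin d → Fin (J+1) := fun i => ⟨j' i, by have := hj'J i; omega⟩ with hjfdef
    have hjfsum : ∑ i', (jf i' : ℕ) = J := hj'sum
    set M₀ : ℕ := Msup jf with hM0def
    have hjM : ∀ i, j' i ≤ M₀ := fun i =>
      Finset.le_sup (f := fun i : Fin d => (jf i : ℕ)) (Finset.mem_univ i)
    have hQpos : ∀ i : Fin d, 0 < 2 ^ (M₀ - (jf i : ℕ)) := fun i => Nat.two_pow_pos _
    set n : (i : Fin d) → Fin (2 ^ (M₀ - (jf i : ℕ))) := fun i =>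
      ⟨min ⌊y i * 2 ^ M₀⌋₊ (2 ^ (M₀ - (jf i : ℕ)) - 1), by have := hQpos i; omega⟩ with hndef
    set t : Tty d J := ⟨⟨jf, hjfsum⟩, n⟩ with htdef
    refine Set.mem_iUnion.mpr ⟨e t, ?_⟩
    have hsymm : e.symm (e t) = t := e.symm_apply_apply t
    simp only [Set.mem_setOf_eq]
    rw [hsymm]
    intro i
    -- arithmetic
    set p : ℝ := (2:ℝ) ^ M₀ with hpdef
    have hp : (0:ℝ) < p := by positivity
    have hcp : (1/2:ℝ) ^ M₀ = p⁻¹ := by rw [hpdef, one_div_pow, one_div]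
    set z : ℝ := y i * p with hzdef
    have hz0 : 0 ≤ z := mul_nonneg (hy01 i).1 hp.le
    set Q : ℕ := 2 ^ (M₀ - (jf i : ℕ)) with hQdef
    have hQ1 : 1 ≤ Q := hQpos i
    have hzQ : z ≤ (Q:ℝ) := by
      have h1 : (1/2:ℝ)^(j' i) * p = (Q:ℝ) := by
        have hjfi : ((jf i : ℕ)) = j' i := rfl
        rw [hQdef, hpdef, hjfi]
        push_cast
        rw [pow_sub₀ (2:ℝ) two_ne_zero (by rw [← hjfi]; exact hjM i), one_div_pow]
        field_simp
      calc z = y i * p := hzdef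
        _ ≤ (1/2:ℝ)^(j' i) * p := mul_le_mul_of_nonneg_right (hj'y i) hp.le
        _ = (Q:ℝ) := h1
    have hfloorz : (⌊z⌋₊ : ℝ) ≤ z := Nat.floor_le hz0
    have hnival : (n i : ℕ) = min ⌊z⌋₊ (Q - 1) := rfl
    constructor
    · -- lower bound
      rw [hcp]
      have hval : ((n i : ℕ) : ℝ) ≤ z := by
        rcases le_or_gt ⌊z⌋₊ (Q - 1) with h | h
        · rw [hnival, min_eq_left h]; exact hfloorz
        · rw [hnival, min_eq_right h.le]
          have : ((Q - 1 : ℕ) : ℝ) ≤ (⌊z⌋₊ : ℝ) := by exact_mod_cast (by omega : Q - 1 ≤ ⌊z⌋₊)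
          linarith
      calc ((n i : ℕ) : ℝ) * p⁻¹ = ((n i : ℕ) : ℝ) / p := by rw [div_eq_mul_inv]
        _ ≤ y i := by
          rw [div_le_iff₀ hp]
          exact hval
    · -- upper bound
      rw [hcp]
      have hval : z ≤ ((n i : ℕ) : ℝ) + 1 := by
        rcases le_or_gt ⌊z⌋₊ (Q - 1) with h | h
        · rw [hnival, min_eq_left h]
          exact (Nat.lt_floor_add_one z).le
        · rw [hnival, min_eq_right h.le]
          have : ((Q - 1 : ℕ) : ℝ) = (Q:ℝ) - 1 := by
            have := hQ1; push_cast [Nat.cast_sub this]; ring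
          rw [this]
          linarith
      have : y i ≤ (((n i : ℕ) : ℝ) + 1) / p := by
        rw [le_div_iff₀ hp]
        exact hval
      calc y i ≤ (((n i : ℕ) : ℝ) + 1) / p := this
        _ = ((n i : ℕ) : ℝ) * p⁻¹ + p⁻¹ := by field_simp
  · -- the sum bound
    have hsum1 : ∑ k : Fin m, ((1/2:ℝ) ^ (Msup (e.symm k).1.1)) ^ s
        = ∑ t : Tty d J, ((1/2:ℝ) ^ (Msup t.1.1)) ^ s := by
      exact Equiv.sum_comp e.symm (fun t : Tty d J => ((1/2:ℝ) ^ (Msup t.1.1)) ^ s)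
    rw [hsum1]
    have hsum2 : ∑ t : Tty d J, ((1/2:ℝ) ^ (Msup t.1.1)) ^ s
        = ∑ j : Sty d J,
            ((2 ^ (∑ i, (Msup j.1 - (j.1 i : ℕ))) : ℕ) : ℝ) * ((1/2:ℝ) ^ (Msup j.1)) ^ s := by
      rw [← Finset.univ_sigma_univ, Finset.sum_sigma]
      apply Finset.sum_congr rfl
      intro j _
      dsimp only
      rw [Finset.sum_const, nsmul_eq_mul]
      congr 1
      norm_cast
      rw [Finset.card_univ, Fintype.card_pi]
      simp only [Fintype.card_fin]
      exact Finset.prod_pow_eq_pow_sum _ _ _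
    rw [hsum2]
    -- per-term bound
    have hperm : ∀ j : Sty d J,
        ((2 ^ (∑ i, (Msup j.1 - (j.1 i : ℕ))) : ℕ) : ℝ) * ((1/2:ℝ) ^ (Msup j.1)) ^ s
          ≤ (1/2:ℝ)^J * ∑ i, r ^ (j.1 i : ℕ) := by
      intro j
      set M₀ : ℕ := Msup j.1 with hM0def
      have hjM : ∀ i, (j.1 i : ℕ) ≤ M₀ := fun i =>
        Finset.le_sup (f := fun i : Fin d => (j.1 i : ℕ)) (Finset.mem_univ i)
      set E : ℕ := ∑ i, (M₀ - (j.1 i : ℕ)) with hEdef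
      have hEJ : E + J = d * M₀ := by
        have h1 : ∀ i : Fin d, (M₀ - (j.1 i : ℕ)) + (j.1 i : ℕ) = M₀ := fun i =>
          Nat.sub_add_cancel (hjM i)
        have h2 : E + ∑ i, (j.1 i : ℕ) = ∑ i : Fin d, M₀ := by
          rw [hEdef, ← Finset.sum_add_distrib]
          exact Finset.sum_congr rfl fun i _ => h1 i
        rw [j.2] at h2
        simpa [Finset.sum_const, Finset.card_univ, mul_comm] using h2
      have heq : ((2 ^ E : ℕ) : ℝ) * ((1/2:ℝ) ^ M₀) ^ s = (1/2:ℝ)^J * r ^ M₀ := by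
        have e1 : ((2 ^ E : ℕ) : ℝ) = (2:ℝ) ^ ((E:ℝ)) := by
          push_cast
          rw [← Real.rpow_natCast 2 E]
        have e2 : ((1/2:ℝ) ^ M₀) ^ s = (2:ℝ) ^ (-(M₀:ℝ) * s) := by
          have : (1/2:ℝ) ^ M₀ = (2:ℝ) ^ (-(M₀:ℝ)) := by
            rw [Real.rpow_neg (by norm_num), Real.rpow_natCast 2 M₀, one_div_pow, one_div]
          rw [this, ← Real.rpow_mul (by norm_num)]
        have e3 : (1/2:ℝ)^J = (2:ℝ) ^ (-(J:ℝ)) := by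
          rw [Real.rpow_neg (by norm_num), Real.rpow_natCast 2 J, one_div_pow, one_div]
        have e4 : r ^ M₀ = (2:ℝ) ^ (((d:ℝ) - s) * (M₀:ℝ)) := by
          rw [hrdef, ← Real.rpow_natCast ((2:ℝ) ^ ((d:ℝ) - s)) M₀, ← Real.rpow_mul (by norm_num)]
        rw [e1, e2, e3, e4, ← Real.rpow_add (by norm_num), ← Real.rpow_add (by norm_num)]
        congr 1
        have : (E:ℝ) + (J:ℝ) = (d:ℝ) * (M₀:ℝ) := by exact_mod_cast congrArg Nat.cast hEJ
        nlinarith [this]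
      rw [heq]
      apply mul_le_mul_of_nonneg_left _ (by positivity)
      obtain ⟨i0, _, hi0⟩ := Finset.exists_mem_eq_sup Finset.univ
        (Finset.univ_nonempty_iff.mpr ⟨⟨0, hd⟩⟩) (fun i : Fin d => (j.1 i : ℕ))
      have : r ^ M₀ = r ^ (j.1 i0 : ℕ) := by rw [hM0def, Msup, hi0]
      rw [this]
      exact Finset.single_le_sum (f := fun i : Fin d => r ^ (j.1 i : ℕ))
        (fun i _ => le_of_lt (pow_pos hr0 _)) (Finset.mem_univ i0)
    have hsum3 : ∑ j : Sty d J,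
        ((2 ^ (∑ i, (Msup j.1 - (j.1 i : ℕ))) : ℕ) : ℝ) * ((1/2:ℝ) ^ (Msup j.1)) ^ s
        ≤ (1/2:ℝ)^J * (d * (r ^ J * D)) := by
      calc ∑ j : Sty d J,
          ((2 ^ (∑ i, (Msup j.1 - (j.1 i : ℕ))) : ℕ) : ℝ) * ((1/2:ℝ) ^ (Msup j.1)) ^ s
          ≤ ∑ j : Sty d J, (1/2:ℝ)^J * ∑ i, r ^ (j.1 i : ℕ) :=
            Finset.sum_le_sum fun j _ => hperm j
        _ = (1/2:ℝ)^J * ∑ i : Fin d, ∑ j : Sty d J, r ^ (j.1 i : ℕ) := by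
            rw [← Finset.mul_sum, Finset.sum_comm]
        _ ≤ (1/2:ℝ)^J * ∑ i : Fin d, (r ^ J * D) := by
            apply mul_le_mul_of_nonneg_left _ (by positivity)
            refine Finset.sum_le_sum fun i _ => ?_
            have h := sum_over_S_le (J := J) hd i hr1
            rw [← hTdef, ← hDdef] at h
            exact h
        _ = (1/2:ℝ)^J * (d * (r ^ J * D)) := by
            rw [Finset.sum_const, Finset.card_univ, Fintype.card_fin, nsmul_eq_mul]
    -- convert (1/2)^J * r^J to rpow of (1/2)^J
    have hwσ : (1/2:ℝ)^J * r ^ J = ((1/2:ℝ)^J) ^ (s - d + 1) := by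
      have e3 : (1/2:ℝ)^J = (2:ℝ) ^ (-(J:ℝ)) := by
        rw [Real.rpow_neg (by norm_num), Real.rpow_natCast 2 J, one_div_pow, one_div]
      have e4 : r ^ J = (2:ℝ) ^ (((d:ℝ) - s) * (J:ℝ)) := by
        rw [hrdef, ← Real.rpow_natCast ((2:ℝ) ^ ((d:ℝ) - s)) J, ← Real.rpow_mul (by norm_num)]
      rw [e3, e4, ← Real.rpow_add (by norm_num), ← Real.rpow_mul (by norm_num)]
      congr 1
      ring
    have hσ0 : 0 < s - d + 1 := by linarith only [hs]
    have hσ1 : s - d + 1 ≤ 1 := by linarith only [hs']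
    have hwpos : (0:ℝ) < (1/2:ℝ)^J := by positivity
    have hmono : ((1/2:ℝ)^J) ^ (s - d + 1) ≤ (2 ^ (d+1) * δ) ^ (s - d + 1) :=
      Real.rpow_le_rpow hwpos.le hw.le hσ0.le
    have hsplit : ((2:ℝ) ^ (d+1) * δ) ^ (s - d + 1)
        = ((2:ℝ) ^ (d+1)) ^ (s - d + 1) * δ ^ (s - d + 1) :=
      Real.mul_rpow (by positivity) hδ.le
    have hbase : ((2:ℝ) ^ (d+1)) ^ (s - d + 1) ≤ (2:ℝ) ^ (d+1) := by
      calc ((2:ℝ) ^ (d+1)) ^ (s - d + 1) ≤ ((2:ℝ) ^ (d+1)) ^ (1:ℝ) :=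
        Real.rpow_le_rpow_of_exponent_le (one_le_pow₀ (by norm_num)) hσ1
      _ = (2:ℝ) ^ (d+1) := Real.rpow_one _
    calc ∑ j : Sty d J,
        ((2 ^ (∑ i, (Msup j.1 - (j.1 i : ℕ))) : ℕ) : ℝ) * ((1/2:ℝ) ^ (Msup j.1)) ^ s
        ≤ (1/2:ℝ)^J * (d * (r ^ J * D)) := hsum3
      _ = (d * D) * ((1/2:ℝ)^J * r ^ J) := by ring
      _ = (d * D) * ((1/2:ℝ)^J) ^ (s - d + 1) := by rw [hwσ]
      _ ≤ (d * D) * ((2 ^ (d+1) * δ) ^ (s - d + 1)) := by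
          apply mul_le_mul_of_nonneg_left hmono (mul_nonneg hdpos.le hD0.le)
      _ = (d * D) * (((2:ℝ) ^ (d+1)) ^ (s - d + 1) * δ ^ (s - d + 1)) := by rw [hsplit]
      _ ≤ (d * D) * ((2:ℝ) ^ (d+1) * δ ^ (s - d + 1)) := by
          apply mul_le_mul_of_nonneg_left _ (mul_nonneg hdpos.le hD0.le)
          apply mul_le_mul_of_nonneg_right hbase (Real.rpow_nonneg hδ.le _)
      _ = d * D * 2 ^ (d+1) * δ ^ (s - d + 1) := by ring
end

section
/- Let β > 1, c > 0, and let f : [0,1) → ℝ satisfy |f(x) − f(y)| ≤ c|x − y| for all x, y. Let n ≥ 1 with β^n ≥ 2c, let w be an admissible word of length n, and let ψ > 0. If x, x′ ∈ I_{n,β}(w) satisfy |T_β^n(x) − f(x)| < ψ and |T_β^n(x′) − f(x′)| < ψ (absolute values of real numbers), then |x − x′| ≤ 4ψβ^{−n}. In particular, the set J_{n,β}(w) := {x ∈ I_{n,β}(w) : |T_β^n(x) − f(x)| < ψ} has diameter at most 4ψβ^{−n}. -/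
lemma iterate_sub_eq (β : ℝ) (n : ℕ) (w : Fin n → ℤ) {x x' : ℝ}
    (hx : x ∈ cylinder β n w) (hx' : x' ∈ cylinder β n w) :
    ∀ k, k ≤ n → (betaT β)^[k] x - (betaT β)^[k] x' = β ^ k * (x - x') := by
  intro k
  induction k with
  | zero => intro _; simp
  | succ k ih =>
    intro hk
    have hkn : k < n := hk
    have h := ih (le_of_lt hkn)
    have e1 : ⌊β * (betaT β)^[k] x⌋ = w ⟨k, hkn⟩ := hx.2 ⟨k, hkn⟩
    have e2 : ⌊β * (betaT β)^[k] x'⌋ = w ⟨k, hkn⟩ := hx'.2 ⟨k, hkn⟩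
    rw [Function.iterate_succ_apply', Function.iterate_succ_apply']
    show Int.fract (β * (betaT β)^[k] x) - Int.fract (β * (betaT β)^[k] x') = _
    rw [Int.fract, Int.fract, e1, e2]
    calc (β * (betaT β)^[k] x - (w ⟨k, hkn⟩ : ℤ)) - (β * (betaT β)^[k] x' - (w ⟨k, hkn⟩ : ℤ))
        = β * ((betaT β)^[k] x - (betaT β)^[k] x') := by ring
      _ = β * (β ^ k * (x - x')) := by rw [h]
      _ = β ^ (k + 1) * (x - x') := by ring

/-- **Diameter estimate for `J_{n,β}(w)`.** Let `β > 1`, `c > 0`, `f` Lipschitz with constant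
`c` on `[0,1)`, `n ≥ 1` with `β^n ≥ 2c`, `w` admissible and `ψ > 0`. If
`x, x' ∈ I_{n,β}(w)` satisfy `|T_β^n(x) - f(x)| < ψ` and `|T_β^n(x') - f(x')| < ψ`, then
`|x - x'| ≤ 4 ψ β^{-n}`; in particular
`J_{n,β}(w) = {x ∈ I_{n,β}(w) : |T_β^n(x) - f(x)| < ψ}` has diameter at most `4 ψ β^{-n}`. -/
theorem diam_J_le
    (β : ℝ) (hβ : 1 < β) (c : ℝ) (hc : 0 < c) (f : ℝ → ℝ)
    (hf : ∀ x ∈ Set.Ico (0 : ℝ) 1, ∀ y ∈ Set.Ico (0 : ℝ) 1, |f x - f y| ≤ c * |x - y|)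
    (n : ℕ) (hn : 1 ≤ n) (hnc : 2 * c ≤ β ^ n)
    (w : Fin n → ℤ) (hw : (cylinder β n w).Nonempty) (ψ : ℝ) (hψ : 0 < ψ) :
    (∀ x ∈ cylinder β n w, ∀ x' ∈ cylinder β n w,
        |(betaT β)^[n] x - f x| < ψ → |(betaT β)^[n] x' - f x'| < ψ →
        |x - x'| ≤ 4 * ψ * (β ^ n)⁻¹) ∧
      Metric.diam {x ∈ cylinder β n w | |(betaT β)^[n] x - f x| < ψ} ≤
        4 * ψ * (β ^ n)⁻¹ := by
  have hβn : (0:ℝ) < β ^ n := pow_pos (by linarith) n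
  have main : ∀ x ∈ cylinder β n w, ∀ x' ∈ cylinder β n w,
      |(betaT β)^[n] x - f x| < ψ → |(betaT β)^[n] x' - f x'| < ψ →
      |x - x'| ≤ 4 * ψ * (β ^ n)⁻¹ := by
    intro x hx x' hx' h1 h2
    have key := iterate_sub_eq β n w hx hx' n le_rfl
    have hlip := hf x hx.1 x' hx'.1
    have habs : β ^ n * |x - x'| = |(betaT β)^[n] x - (betaT β)^[n] x'| := by
      rw [key, abs_mul, abs_of_pos hβn]
    have htri : |(betaT β)^[n] x - (betaT β)^[n] x'| ≤
        |(betaT β)^[n] x - f x| + |f x - f x'| + |f x' - (betaT β)^[n] x'| := by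
      have t1 := abs_sub_le ((betaT β)^[n] x) (f x) ((betaT β)^[n] x')
      have t2 := abs_sub_le (f x) (f x') ((betaT β)^[n] x')
      linarith
    have h2' : |f x' - (betaT β)^[n] x'| < ψ := by rwa [abs_sub_comm]
    have hstep : β ^ n * |x - x'| ≤ 2 * ψ + c * |x - x'| := by
      rw [habs]; calc |(betaT β)^[n] x - (betaT β)^[n] x'| ≤ _ := htri
        _ ≤ 2 * ψ + c * |x - x'| := by linarith
    have hcb : c ≤ β ^ n / 2 := by linarith
    have : (β ^ n / 2) * |x - x'| ≤ 2 * ψ := by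
      nlinarith [abs_nonneg (x - x')]
    rw [show 4 * ψ * (β ^ n)⁻¹ = (2 * ψ) / (β ^ n / 2) by field_simp; ring]
    rw [le_div_iff₀ (by linarith)]
    linarith
  refine ⟨main, ?_⟩
  apply Metric.diam_le_of_forall_dist_le
  · positivity
  · rintro x ⟨hx, h1⟩ y ⟨hy, h2⟩
    rw [Real.dist_eq]
    exact main x hx y hy h1 h2
end

section
/- Let β > 1 and n ≥ 1. Then every point x ∈ [0,1) lies within distance (n+3)β^{−n} of some full cylinder of order n; that is, for every x ∈ [0,1) there exist a full cylinder I_{n,β}(w) of order n and a point y ∈ I_{n,β}(w) with |x − y| ≤ (n+3)β^{−n}. Consequently, for any choice of one point x_{n,w} from each full cylinder I_{n,β}(w) of order n, the balls B(x_{n,w}, (n+3)β^{−n}) cover [0,1). -/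
/-- `I_{n,β}(w)` is a *full* cylinder: a left-closed right-open interval of length exactly
`β^{-n}`. -/
def IsFullCylinder (β : ℝ) (n : ℕ) (w : Fin n → ℤ) : Prop :=
  ∃ a : ℝ, cylinder β n w = Set.Ico a (a + (β ^ n)⁻¹)

namespace FC
variable {β : ℝ}

/-- truncation: x minus its order-m tail -/
noncomputable def Sb (β : ℝ) (m : ℕ) (x : ℝ) : ℝ := x - (β ^ m)⁻¹ * (betaT β)^[m] x

lemma T_nonneg (x : ℝ) : 0 ≤ betaT β x := Int.fract_nonneg _
lemma T_lt_one (x : ℝ) : betaT β x < 1 := Int.fract_lt_one _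

lemma iter_nonneg {x : ℝ} (hx : 0 ≤ x) (m : ℕ) : 0 ≤ (betaT β)^[m] x := by
  cases m with
  | zero => simpa using hx
  | succ m => rw [Function.iterate_succ_apply']; exact T_nonneg _

lemma iter_lt_one {x : ℝ} (hx : x < 1) (m : ℕ) : (betaT β)^[m] x < 1 := by
  cases m with
  | zero => simpa using hx
  | succ m => rw [Function.iterate_succ_apply']; exact T_lt_one _

lemma T_succ (m : ℕ) (x : ℝ) :
    (betaT β)^[m+1] x = β * (betaT β)^[m] x - ⌊β * (betaT β)^[m] x⌋ := by
  rw [Function.iterate_succ_apply']; rfl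

lemma Sb_zero (x : ℝ) : Sb β 0 x = 0 := by simp [Sb]

lemma Sb_succ (hβ : 1 < β) (m : ℕ) (x : ℝ) :
    Sb β (m+1) x = Sb β m x + (β ^ (m+1))⁻¹ * ⌊β * (betaT β)^[m] x⌋ := by
  have hb0 : (0:ℝ) < β := by linarith
  have h1 : (β ^ m) ≠ 0 := by positivity
  have h2 : (β ^ (m+1)) ≠ 0 := by positivity
  have hbne : (β:ℝ) ≠ 0 := by linarith
  have e : (β ^ (m+1))⁻¹ * β = (β ^ m)⁻¹ := by
    rw [pow_succ, mul_inv]; field_simp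
  rw [Sb, Sb, T_succ]
  linear_combination (-(betaT β)^[m] x) * e

lemma Sb_nonneg (hβ : 1 < β) {x : ℝ} (hx : 0 ≤ x) (m : ℕ) : 0 ≤ Sb β m x := by
  induction m with
  | zero => simp [Sb_zero]
  | succ m ih =>
      rw [Sb_succ hβ]
      have hb0 : (0:ℝ) < β := by linarith
      have hd : (0:ℤ) ≤ ⌊β * (betaT β)^[m] x⌋ := by
        apply Int.floor_nonneg.2
        exact mul_nonneg (by linarith) (iter_nonneg hx m)
      have : (0:ℝ) ≤ (⌊β * (betaT β)^[m] x⌋ : ℝ) := by exact_mod_cast hd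
      have hp : (0:ℝ) < (β ^ (m+1))⁻¹ := by positivity
      nlinarith

lemma Sb_le {x : ℝ} (hβ : 1 < β) (hx : 0 ≤ x) (m : ℕ) : Sb β m x ≤ x := by
  have hp : (0:ℝ) < (β ^ m)⁻¹ := by positivity
  have := iter_nonneg (β := β) hx m
  rw [Sb]; nlinarith

lemma T_Sb_one (hβ : 1 < β) (m : ℕ) {x : ℝ} (hx : 0 ≤ x) (hx1 : x < 1) :
    betaT β (Sb β (m+1) x) = Sb β m (betaT β x) := by
  have hb0 : (0:ℝ) < β := by linarith
  have h1 : (β ^ m) ≠ 0 := by positivity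
  have key : β * Sb β (m+1) x = (⌊β * x⌋ : ℝ) + Sb β m (betaT β x) := by
    rw [Sb, Sb, Function.iterate_succ_apply]
    have : betaT β x = β * x - ⌊β * x⌋ := rfl
    rw [this]
    have hbne : (β:ℝ) ≠ 0 := by linarith
    have e : (β ^ (m+1))⁻¹ * β = (β ^ m)⁻¹ := by
      rw [pow_succ, mul_inv]; field_simp
    linear_combination (-(betaT β)^[m] (β * x - ⌊β * x⌋)) * e
  have hmem0 : 0 ≤ Sb β m (betaT β x) := Sb_nonneg hβ (T_nonneg x) m
  have hmem1 : Sb β m (betaT β x) < 1 :=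
    lt_of_le_of_lt (Sb_le hβ (T_nonneg x) m) (T_lt_one x)
  show Int.fract (β * Sb β (m+1) x) = _
  rw [key, Int.fract_intCast_add, Int.fract_eq_self.2 ⟨hmem0, hmem1⟩]

lemma T_Sb (hβ : 1 < β) (j : ℕ) : ∀ k : ℕ, ∀ x : ℝ, 0 ≤ x → x < 1 →
    (betaT β)^[j] (Sb β (j + k) x) = Sb β k ((betaT β)^[j] x) := by
  induction j with
  | zero => intro k x _ _; simp
  | succ j ih =>
      intro k x hx hx1
      have : j + 1 + k = (j + k) + 1 := by omega
      rw [this, Function.iterate_succ_apply, Function.iterate_succ_apply,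
        T_Sb_one hβ (j + k) hx hx1]
      exact ih k (betaT β x) (T_nonneg x) (T_lt_one x)


/-- Affine continuation to the right while no level hits 1. -/
lemma affine_iter (hβ : 1 < β) {x y : ℝ} (hx : 0 ≤ x) (hxy : x ≤ y) :
    ∀ i : ℕ, (∀ j, j ≤ i → (betaT β)^[j] x + β ^ j * (y - x) < 1) →
      (betaT β)^[i] y = (betaT β)^[i] x + β ^ i * (y - x) := by
  intro i
  induction i with
  | zero => intro _; simp
  | succ i ih =>
      intro h
      have hi : (betaT β)^[i] y = (betaT β)^[i] x + β ^ i * (y - x) :=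
        ih (fun j hj => h j (le_trans hj (Nat.le_succ i)))
      have hb0 : (0:ℝ) < β := by linarith
      rw [Function.iterate_succ_apply', hi]
      show Int.fract (β * ((betaT β)^[i] x + β ^ i * (y - x))) = _
      have key : β * ((betaT β)^[i] x + β ^ i * (y - x))
          = (⌊β * (betaT β)^[i] x⌋ : ℝ) + ((betaT β)^[i+1] x + β ^ (i+1) * (y - x)) := by
        rw [T_succ]; ring
      have h0 : 0 ≤ (betaT β)^[i+1] x + β ^ (i+1) * (y - x) := by
        have h1 : (0:ℝ) ≤ β ^ (i+1) * (y - x) :=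
          mul_nonneg (by positivity) (by linarith)
        nlinarith [iter_nonneg (β := β) hx (i+1)]
      have h1 : (betaT β)^[i+1] x + β ^ (i+1) * (y - x) < 1 := h (i+1) le_rfl
      rw [key, Int.fract_intCast_add, Int.fract_eq_self.2 ⟨h0, h1⟩]

/-- digit equality from two consecutive affine relations -/
lemma digit_eq_of_affine {x y : ℝ} (i : ℕ)
    (hi : (betaT β)^[i] y = (betaT β)^[i] x + β ^ i * (y - x))
    (hi1 : (betaT β)^[i+1] y = (betaT β)^[i+1] x + β ^ (i+1) * (y - x)) :
    ⌊β * (betaT β)^[i] y⌋ = ⌊β * (betaT β)^[i] x⌋ := by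
  have e1 := T_succ (β := β) i x
  have e2 := T_succ (β := β) i y
  have : (⌊β * (betaT β)^[i] y⌋ : ℝ) = (⌊β * (betaT β)^[i] x⌋ : ℝ) := by
    rw [pow_succ] at hi1
    linear_combination -e1 + e2 + β * hi - hi1
  exact_mod_cast this

lemma Sb_eq_of_digits (hβ : 1 < β) {x y : ℝ} :
    ∀ m : ℕ, (∀ i, i < m → ⌊β * (betaT β)^[i] y⌋ = ⌊β * (betaT β)^[i] x⌋) →
    Sb β m y = Sb β m x := by
  intro m
  induction m with
  | zero => intro _; rw [Sb_zero, Sb_zero]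
  | succ m ih =>
      intro h
      rw [Sb_succ hβ, Sb_succ hβ, ih (fun i hi => h i (Nat.lt_succ_of_lt hi)),
        h m (Nat.lt_succ_self m)]

/-- `c` is the left endpoint of a full cylinder of order `m`. -/
def FullPt (β : ℝ) (m : ℕ) (c : ℝ) : Prop :=
  0 ≤ c ∧ ∀ i, i ≤ m → (betaT β)^[i] c + β ^ i * (β ^ m)⁻¹ ≤ 1

lemma FullPt.iter_zero (hβ : 1 < β) {m : ℕ} {c : ℝ} (h : FullPt β m c) :
    (betaT β)^[m] c = 0 := by
  have h1 := h.2 m le_rfl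
  have h2 : β ^ m * (β ^ m)⁻¹ = 1 := by
    have : (β:ℝ) ^ m ≠ 0 := by positivity
    field_simp
  have := iter_nonneg (β := β) h.1 m
  nlinarith

lemma FullPt.lt_one (hβ : 1 < β) {m : ℕ} {c : ℝ} (h : FullPt β m c) :
    c + (β ^ m)⁻¹ ≤ 1 := by
  have h1 := h.2 0 (Nat.zero_le m)
  simpa using h1

lemma FullPt.zero (hβ : 1 < β) : FullPt β 0 (0:ℝ) := by
  refine ⟨le_rfl, fun i hi => ?_⟩
  interval_cases i
  simp

/-- Full points give full cylinders. -/
lemma fullPt_cylinder_eq (hβ : 1 < β) {m : ℕ} (hm : 1 ≤ m) {c : ℝ} (h : FullPt β m c) :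
    cylinder β m (fun i => ⌊β * (betaT β)^[(i:ℕ)] c⌋) = Set.Ico c (c + (β ^ m)⁻¹) := by
  have hb0 : (0:ℝ) < β := by linarith
  have hpm : (0:ℝ) < (β ^ m)⁻¹ := by positivity
  ext z
  constructor
  · rintro ⟨⟨hz0, hz1⟩, hdig⟩
    have hS : Sb β m z = Sb β m c := by
      apply Sb_eq_of_digits hβ
      intro i hi
      have := hdig ⟨i, hi⟩
      simpa using this
    have hSc : Sb β m c = c := by
      rw [Sb, h.iter_zero hβ]; ring
    have hz : z = c + (β ^ m)⁻¹ * (betaT β)^[m] z := by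
      have : Sb β m z = z - (β ^ m)⁻¹ * (betaT β)^[m] z := rfl
      rw [hS, hSc] at this
      linarith
    constructor
    · rw [hz]
      nlinarith [iter_nonneg (β := β) hz0 m]
    · rw [hz]
      have h1 : (betaT β)^[m] z < 1 := iter_lt_one hz1 m
      nlinarith
  · rintro ⟨hcz, hzc⟩
    have hyp : ∀ j, j ≤ m → (betaT β)^[j] c + β ^ j * (z - c) < 1 := by
      intro j hj
      have hpj : (0:ℝ) < β ^ j := by positivity
      have : β ^ j * (z - c) < β ^ j * (β ^ m)⁻¹ := by
        apply mul_lt_mul_of_pos_left _ hpj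
        linarith
      have h2 := h.2 j hj
      linarith
    have haff : ∀ i, i ≤ m → (betaT β)^[i] z = (betaT β)^[i] c + β ^ i * (z - c) := by
      intro i hi
      exact affine_iter hβ h.1 hcz i (fun j hj => hyp j (le_trans hj hi))
    refine ⟨⟨?_, ?_⟩, ?_⟩
    · linarith [h.1]
    · have := h.lt_one hβ
      linarith
    · intro i
      exact digit_eq_of_affine (i:ℕ) (haff i (le_of_lt i.2)) (haff ((i:ℕ)+1) i.2)


lemma pow_inv_cancel (hβ : 1 < β) (a b : ℕ) : β ^ a * (β ^ (a + b))⁻¹ = (β ^ b)⁻¹ := by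
  have hb0 : (0:ℝ) < β := by linarith
  rw [pow_add, mul_inv, ← mul_assoc, mul_inv_cancel₀ (by positivity), one_mul]

lemma inv_mul_inv_pow (hβ : 1 < β) (a b : ℕ) : (β ^ a)⁻¹ * (β ^ b)⁻¹ = (β ^ (a + b))⁻¹ := by
  rw [pow_add, mul_inv]

/-- Main induction: every point of [0,1) is within (m+2)β^{-m} of a full point. -/
lemma main_ind (hβ : 1 < β) : ∀ m : ℕ, ∀ x : ℝ, 0 ≤ x → x < 1 →
    ∃ c, FullPt β m c ∧ |x - c| < ((m:ℝ) + 2) * (β ^ m)⁻¹ := by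
  have hb0 : (0:ℝ) < β := by linarith
  intro m
  induction m using Nat.strong_induction_on with
  | _ m IH =>
  intro x hx0 hx1
  rcases Nat.eq_zero_or_pos m with rfl | hm
  · refine ⟨0, FullPt.zero hβ, ?_⟩
    simp only [Nat.cast_zero, pow_zero, inv_one, mul_one, sub_zero]
    rw [abs_of_nonneg hx0]; linarith
  -- the unified case: a prefix-minimizing index i0 ≥ 1 exists
  have hU : ∀ z, 0 ≤ z → z < 1 → ∀ i0, 1 ≤ i0 → i0 ≤ m →
      (∀ j, j ≤ i0 →
        (β ^ i0)⁻¹ * (1 - (betaT β)^[i0] z) ≤ (β ^ j)⁻¹ * (1 - (betaT β)^[j] z)) →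
      ∃ c, FullPt β m c ∧ |z - c| < ((m:ℝ) + 1) * (β ^ m)⁻¹ := by
    intro z hz0 hz1 i0 hi01 hi0m hmin
    obtain ⟨k, hk⟩ : ∃ k, m = i0 + k := Nat.exists_eq_add_of_le hi0m
    have hkm : k < m := by omega
    set c₀ := Sb β i0 z with hc₀def
    have hc₀0 : 0 ≤ c₀ := Sb_nonneg hβ hz0 i0
    have hTc₀ : ∀ j d, j + d = i0 →
        (betaT β)^[j] c₀ = (betaT β)^[j] z - (β ^ d)⁻¹ * (betaT β)^[i0] z := by
      intro j d hjd
      have h1 : (betaT β)^[j] (Sb β (j + d) z) = Sb β d ((betaT β)^[j] z) :=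
        T_Sb hβ j d z hz0 hz1
      rw [hjd] at h1
      rw [hc₀def, h1, Sb]
      have h2 : (betaT β)^[d] ((betaT β)^[j] z) = (betaT β)^[i0] z := by
        rw [← Function.iterate_add_apply, Nat.add_comm d j, hjd]
      rw [h2]
    -- c₀ is a full point of order i0
    have hc₀ : FullPt β i0 c₀ := by
      refine ⟨hc₀0, fun j hj => ?_⟩
      obtain ⟨d, hd⟩ : ∃ d, j + d = i0 := ⟨i0 - j, by omega⟩
      have e1 : β ^ j * (β ^ i0)⁻¹ = (β ^ d)⁻¹ := by rw [← hd]; exact pow_inv_cancel hβ j d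
      have h2 := mul_le_mul_of_nonneg_left (hmin j hj) (le_of_lt (pow_pos hb0 j))
      have e2 : β ^ j * ((β ^ j)⁻¹ * (1 - (betaT β)^[j] z)) = 1 - (betaT β)^[j] z := by
        rw [← mul_assoc, mul_inv_cancel₀ (by positivity), one_mul]
      have e3 : β ^ j * ((β ^ i0)⁻¹ * (1 - (betaT β)^[i0] z))
          = (β ^ d)⁻¹ * (1 - (betaT β)^[i0] z) := by
        rw [← mul_assoc, e1]
      rw [e2, e3] at h2
      rw [mul_sub, mul_one] at h2
      have goalrw : (betaT β)^[j] c₀ + β ^ j * (β ^ i0)⁻¹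
          = (betaT β)^[j] z - (β ^ d)⁻¹ * (betaT β)^[i0] z + (β ^ d)⁻¹ := by
        rw [hTc₀ j d hd, e1]
      rw [goalrw]
      linarith
    have hTi0c₀ : (betaT β)^[i0] c₀ = 0 := hc₀.iter_zero hβ
    -- induction hypothesis at order k for the image point
    obtain ⟨c', hc', hd'⟩ := IH k hkm ((betaT β)^[i0] z) (iter_nonneg hz0 i0) (iter_lt_one hz1 i0)
    have hc'0 : 0 ≤ c' := hc'.1
    have hc'le : c' + (β ^ k)⁻¹ ≤ 1 := hc'.lt_one hβ
    set c := c₀ + (β ^ i0)⁻¹ * c' with hcdef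
    have hcc : c - c₀ = (β ^ i0)⁻¹ * c' := by rw [hcdef]; ring
    have hc₀c : c₀ ≤ c := by
      have h9 : (0:ℝ) ≤ (β ^ i0)⁻¹ * c' := by positivity
      rw [hcdef]; linarith
    have h6 : ∀ d : ℕ, (β ^ d)⁻¹ * c' ≤ (β ^ d)⁻¹ - (β ^ (d + k))⁻¹ := by
      intro d
      have h61 := mul_le_mul_of_nonneg_left (by linarith : c' ≤ 1 - (β ^ k)⁻¹)
        (le_of_lt (by positivity : (0:ℝ) < (β ^ d)⁻¹))
      rw [mul_sub, mul_one, inv_mul_inv_pow hβ d k] at h61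
      exact h61
    -- affine relation from c₀ to c at levels j ≤ i0
    have haffhyp : ∀ j, j ≤ i0 → (betaT β)^[j] c₀ + β ^ j * (c - c₀) < 1 := by
      intro j hj
      obtain ⟨d, hd⟩ : ∃ d, j + d = i0 := ⟨i0 - j, by omega⟩
      have e1 : β ^ j * (β ^ i0)⁻¹ = (β ^ d)⁻¹ := by rw [← hd]; exact pow_inv_cancel hβ j d
      have e4 : β ^ j * ((β ^ i0)⁻¹ * c') = (β ^ d)⁻¹ * c' := by rw [← mul_assoc, e1]
      have h5 := hc₀.2 j hj
      rw [← hd, pow_inv_cancel hβ j d] at h5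
      have h7 : (0:ℝ) < (β ^ (d + k))⁻¹ := by positivity
      rw [hcc, e4]
      linarith [h6 d]
    have haff : ∀ j, j ≤ i0 → (betaT β)^[j] c = (betaT β)^[j] c₀ + β ^ j * (c - c₀) := by
      intro j hj
      exact affine_iter hβ hc₀0 hc₀c j (fun j' hj' => haffhyp j' (le_trans hj' hj))
    have hTi0c : (betaT β)^[i0] c = c' := by
      have h8 := haff i0 le_rfl
      rw [hTi0c₀, hcc, ← mul_assoc, mul_inv_cancel₀ (by positivity), one_mul, zero_add] at h8
      exact h8
    -- c is a full point of order m
    have hcfull : FullPt β m c := by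
      refine ⟨le_trans hc₀0 hc₀c, fun j hj => ?_⟩
      rcases le_or_gt j i0 with hji | hji
      · obtain ⟨d, hd⟩ : ∃ d, j + d = i0 := ⟨i0 - j, by omega⟩
        have e1 : β ^ j * (β ^ i0)⁻¹ = (β ^ d)⁻¹ := by rw [← hd]; exact pow_inv_cancel hβ j d
        have em : β ^ j * (β ^ m)⁻¹ = (β ^ (d + k))⁻¹ := by
          have h10 : m = j + (d + k) := by omega
          rw [h10]; exact pow_inv_cancel hβ j (d + k)
        have e4 : β ^ j * ((β ^ i0)⁻¹ * c') = (β ^ d)⁻¹ * c' := by rw [← mul_assoc, e1]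
        have h5 := hc₀.2 j hji
        rw [← hd, pow_inv_cancel hβ j d] at h5
        rw [haff j hji, hcc, e4, em]
        linarith [h6 d]
      · obtain ⟨k', hk'⟩ : ∃ k', j = i0 + k' := ⟨j - i0, by omega⟩
        have hk'k : k' ≤ k := by omega
        have hTj : (betaT β)^[j] c = (betaT β)^[k'] c' := by
          rw [hk', Nat.add_comm, Function.iterate_add_apply, hTi0c]
        have em : β ^ j * (β ^ m)⁻¹ = β ^ k' * (β ^ k)⁻¹ := by
          rw [hk', hk, pow_add, mul_comm (β ^ i0) (β ^ k'), mul_assoc, pow_inv_cancel hβ i0 k]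
        rw [hTj, em]
        exact hc'.2 k' hk'k
    -- distance bound
    have hzc : z - c = (β ^ i0)⁻¹ * ((betaT β)^[i0] z - c') := by
      rw [hcdef, hc₀def, Sb]; ring
    have habs : |z - c| = (β ^ i0)⁻¹ * |(betaT β)^[i0] z - c'| := by
      rw [hzc, abs_mul, abs_of_pos (by positivity : (0:ℝ) < (β ^ i0)⁻¹)]
    have hlt : |z - c| < ((k:ℝ) + 2) * (β ^ m)⁻¹ := by
      rw [habs]
      have h11 := mul_lt_mul_of_pos_left hd' (by positivity : (0:ℝ) < (β ^ i0)⁻¹)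
      have e5 : (β ^ i0)⁻¹ * (((k:ℝ) + 2) * (β ^ k)⁻¹) = ((k:ℝ) + 2) * (β ^ m)⁻¹ := by
        rw [hk, ← inv_mul_inv_pow hβ i0 k]; ring
      rw [e5] at h11
      exact h11
    refine ⟨c, hcfull, lt_of_lt_of_le hlt ?_⟩
    have h12 : ((k:ℝ) + 2) ≤ ((m:ℝ) + 1) := by
      have : (k:ℝ) + 1 ≤ (m:ℝ) := by exact_mod_cast hkm
      linarith
    exact mul_le_mul_of_nonneg_right h12 (by positivity)
  -- outer case analysis for x
  by_cases hcase : ∃ i0, 1 ≤ i0 ∧ i0 ≤ m ∧ ∀ j, j ≤ i0 →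
      (β ^ i0)⁻¹ * (1 - (betaT β)^[i0] x) ≤ (β ^ j)⁻¹ * (1 - (betaT β)^[j] x)
  · obtain ⟨i0, h1, h2, h3⟩ := hcase
    obtain ⟨c, hc, hlt⟩ := hU x hx0 hx1 i0 h1 h2 h3
    refine ⟨c, hc, lt_of_lt_of_le hlt ?_⟩
    exact mul_le_mul_of_nonneg_right (by linarith) (by positivity)
  · push_neg at hcase
    -- every i in [1,m] has some j ≤ i with strictly smaller f-value; hence f 0 < f i
    have hB2 : ∀ i, 1 ≤ i → i ≤ m →
        (β ^ 0)⁻¹ * (1 - (betaT β)^[0] x) < (β ^ i)⁻¹ * (1 - (betaT β)^[i] x) := by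
      intro i
      induction i using Nat.strong_induction_on with
      | _ i IH2 =>
      intro h1 h2
      obtain ⟨j, hj, hjlt⟩ := hcase i h1 h2
      rcases Nat.eq_zero_or_pos j with rfl | hj1
      · exact hjlt
      · have hji : j < i := by
          rcases lt_or_eq_of_le hj with h | h
          · exact h
          · exfalso; rw [h] at hjlt; exact lt_irrefl _ hjlt
        exact lt_trans (IH2 j hji hj1 (by omega)) hjlt
    have hBm := hB2 m hm le_rfl
    simp only [pow_zero, inv_one, one_mul, Function.iterate_zero, id] at hBm
    -- a = Sb m x, the left endpoint of the (last) cylinder of x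
    set a := Sb β m x with hadef
    have hax : a ≤ x := Sb_le hβ hx0 m
    have ha0 : 0 ≤ a := Sb_nonneg hβ hx0 m
    have hxa : x - a = (β ^ m)⁻¹ * (betaT β)^[m] x := by rw [hadef, Sb]; ring
    have hTm1 : (betaT β)^[m] x < 1 := iter_lt_one hx1 m
    have hTm0 : 0 ≤ (betaT β)^[m] x := iter_nonneg hx0 m
    have hpm : (0:ℝ) < (β ^ m)⁻¹ := by positivity
    have h1a : 1 - a < (β ^ m)⁻¹ := by
      have : (β ^ m)⁻¹ * (1 - (betaT β)^[m] x)
          = (β ^ m)⁻¹ - (β ^ m)⁻¹ * (betaT β)^[m] x := by ring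
      rw [this] at hBm
      linarith
    -- choose z = 1 - β^{-m} < a
    set z := 1 - (β ^ m)⁻¹ with hzdef
    have hbm1 : 1 < β ^ m := one_lt_pow₀ hβ (by omega)
    have hz0 : 0 ≤ z := by
      have : (β ^ m)⁻¹ < 1 := by
        rw [inv_lt_one_iff₀]; right; exact hbm1
      simp only [hzdef]; linarith
    have hz1 : z < 1 := by simp only [hzdef]; linarith
    have hza : z < a := by simp only [hzdef]; linarith
    have hzx : z < x := lt_of_lt_of_le hza hax
    -- some level i ∈ [1,m] must satisfy f_z(i) ≤ a - z
    have hex : ∃ i, 1 ≤ i ∧ i ≤ m ∧ (β ^ i)⁻¹ * (1 - (betaT β)^[i] z) ≤ a - z := by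
      by_contra hcon
      push_neg at hcon
      have hyp : ∀ i, i ≤ m → (betaT β)^[i] z + β ^ i * (a - z) < 1 := by
        intro i hi
        rcases Nat.eq_zero_or_pos i with rfl | hi1
        · simpa using (lt_of_le_of_lt hax hx1)
        · have h13 := hcon i hi1 hi
          have h14 := mul_lt_mul_of_pos_left h13 (pow_pos hb0 i)
          have e2 : β ^ i * ((β ^ i)⁻¹ * (1 - (betaT β)^[i] z)) = 1 - (betaT β)^[i] z := by
            rw [← mul_assoc, mul_inv_cancel₀ (by positivity), one_mul]
          rw [e2] at h14
          linarith
      have haffz : ∀ i, i ≤ m → (betaT β)^[i] a = (betaT β)^[i] z + β ^ i * (a - z) := by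
        intro i hi
        exact affine_iter hβ hz0 (le_of_lt hza) i (fun j hj => hyp j (le_trans hj hi))
      have hdigz : ∀ i, i < m → ⌊β * (betaT β)^[i] a⌋ = ⌊β * (betaT β)^[i] z⌋ := by
        intro i hi
        exact digit_eq_of_affine i (haffz i (le_of_lt hi)) (haffz (i+1) hi)
      have hSeq : Sb β m a = Sb β m z := Sb_eq_of_digits hβ m hdigz
      have hTma : (betaT β)^[m] a = 0 := by
        have h15 : (betaT β)^[m] (Sb β (m + 0) x) = Sb β 0 ((betaT β)^[m] x) :=
          T_Sb hβ m 0 x hx0 hx1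
        rw [Nat.add_zero] at h15
        rw [hadef, h15, Sb_zero]
      have hSa : Sb β m a = a := by rw [Sb, hTma]; ring
      have : a ≤ z := by rw [← hSa, hSeq]; exact Sb_le hβ hz0 m
      linarith
    obtain ⟨i1, hi11, hi1m, hi1le⟩ := hex
    -- global minimizer of f_z over [0,m]
    obtain ⟨i0, hi0mem, hi0min⟩ := Finset.exists_min_image (Finset.range (m+1))
      (fun i => (β ^ i)⁻¹ * (1 - (betaT β)^[i] z)) ⟨0, by simp⟩
    have hi0m : i0 ≤ m := by
      have := Finset.mem_range.1 hi0mem; omega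
    have hi01 : 1 ≤ i0 := by
      by_contra h16
      have h17 : i0 = 0 := by omega
      have h18 := hi0min i1 (Finset.mem_range.2 (by omega))
      rw [h17] at h18
      simp only [pow_zero, inv_one, one_mul, Function.iterate_zero, id] at h18
      have : 1 - z ≤ a - z := le_trans h18 hi1le
      have : a < 1 := lt_of_le_of_lt hax hx1
      linarith
    obtain ⟨c, hc, hzclt⟩ := hU z hz0 hz1 i0 hi01 hi0m
      (fun j hj => hi0min j (Finset.mem_range.2 (by omega)))
    refine ⟨c, hc, ?_⟩
    have habs2 : |x - c| ≤ |x - z| + |z - c| := abs_sub_le x z c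
    have hxz : |x - z| < (β ^ m)⁻¹ := by
      rw [abs_of_pos (by linarith : 0 < x - z)]
      simp only [hzdef]; linarith
    have : ((m:ℝ) + 1) * (β ^ m)⁻¹ + (β ^ m)⁻¹ = ((m:ℝ) + 2) * (β ^ m)⁻¹ := by ring
    linarith

end FC

/-- **Density of full cylinders.** Let `β > 1` and `n ≥ 1`. Every `x ∈ [0,1)` lies within
distance `(n+3) β^{-n}` of some full cylinder of order `n`; consequently, for any choice of
one point from each full cylinder of order `n`, the closed balls of radius `(n+3) β^{-n}`
around the chosen points cover `[0,1)`. -/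
theorem full_cylinders_dense
    (β : ℝ) (hβ : 1 < β) (n : ℕ) (hn : 1 ≤ n) :
    (∀ x ∈ Set.Ico (0 : ℝ) 1, ∃ w : Fin n → ℤ, IsFullCylinder β n w ∧
        ∃ y ∈ cylinder β n w, |x - y| ≤ ((n : ℝ) + 3) * (β ^ n)⁻¹) ∧
      (∀ p : (Fin n → ℤ) → ℝ,
        (∀ w : Fin n → ℤ, IsFullCylinder β n w → p w ∈ cylinder β n w) →
        Set.Ico (0 : ℝ) 1 ⊆
          ⋃ w ∈ {w : Fin n → ℤ | IsFullCylinder β n w},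
            Metric.closedBall (p w) (((n : ℝ) + 3) * (β ^ n)⁻¹)) := by
  have hb0 : (0:ℝ) < β := by linarith
  have hpn : (0:ℝ) < (β ^ n)⁻¹ := by positivity
  have key : ∀ x ∈ Set.Ico (0 : ℝ) 1, ∃ w : Fin n → ℤ, IsFullCylinder β n w ∧
      (∃ c : ℝ, cylinder β n w = Set.Ico c (c + (β ^ n)⁻¹) ∧
        |x - c| < ((n : ℝ) + 2) * (β ^ n)⁻¹) := by
    intro x hx
    obtain ⟨c, hc, hlt⟩ := FC.main_ind hβ n x hx.1 hx.2
    have hcyl := FC.fullPt_cylinder_eq hβ hn hc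
    exact ⟨fun i => ⌊β * (betaT β)^[(i:ℕ)] c⌋, ⟨c, hcyl⟩, c, hcyl, hlt⟩
  constructor
  · intro x hx
    obtain ⟨w, hwfull, c, hcyl, hlt⟩ := key x hx
    refine ⟨w, hwfull, c, ?_, ?_⟩
    · rw [hcyl]; exact ⟨le_rfl, by linarith⟩
    · have : ((n:ℝ) + 2) * (β ^ n)⁻¹ ≤ ((n:ℝ) + 3) * (β ^ n)⁻¹ :=
        mul_le_mul_of_nonneg_right (by linarith) (le_of_lt hpn)
      linarith
  · intro p hp x hx
    obtain ⟨w, hwfull, c, hcyl, hlt⟩ := key x hx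
    have hpw : p w ∈ cylinder β n w := hp w hwfull
    rw [hcyl] at hpw
    obtain ⟨hpw1, hpw2⟩ := hpw
    refine Set.mem_iUnion₂.2 ⟨w, hwfull, ?_⟩
    rw [Metric.mem_closedBall, Real.dist_eq]
    have h1 : |x - p w| ≤ |x - c| + |c - p w| := abs_sub_le x c (p w)
    have h2 : |c - p w| < (β ^ n)⁻¹ := by
      rw [abs_sub_comm, abs_of_nonneg (by linarith : (0:ℝ) ≤ p w - c)]
      linarith
    have : ((n:ℝ) + 2) * (β ^ n)⁻¹ + (β ^ n)⁻¹ = ((n:ℝ) + 3) * (β ^ n)⁻¹ := by ring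
    linarith
end

section
/- Let β > 1 and n ≥ 1. The cylinders of order n for the β-transformation are pairwise disjoint intervals partitioning [0,1); order them from left to right. Then among any n+1 consecutive cylinders of order n (i.e. any n+1 cylinders that are adjacent in this ordering, so that the closure of their union is an interval), at least one is a full cylinder, i.e. has length exactly β^{−n}. -/
open Set

theorem exists_mem_Ico_of_closure_iUnion_eq_Icc {α ι : Type*} [LinearOrder α]
    [TopologicalSpace α] [OrderTopology α] [DenselyOrdered α] [Finite ι] {L R : ι → α}
    {a b x : α} (h : closure (⋃ i, Ico (L i) (R i)) = Icc a b) (hax : a ≤ x) (hxb : x < b) :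
    ∃ i, x ∈ Ico (L i) (R i) := by
  have hcover : Ioo x b ⊆ ⋃ i, Icc (L i) (R i) ∩ Ioi x := fun y hy => by
    have hy' : y ∈ ⋃ i, closure (Ico (L i) (R i)) := by
      rw [← closure_iUnion_of_finite, h]; exact ⟨hax.trans hy.1.le, hy.2.le⟩
    obtain ⟨i, hi⟩ := mem_iUnion.mp hy'
    exact mem_iUnion.mpr ⟨i, closure_minimal Ico_subset_Icc_self isClosed_Icc hi, hy.1⟩
  have hx : x ∈ closure (Ioo x b) := by rw [closure_Ioo hxb.ne]; exact ⟨le_rfl, hxb.le⟩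
  have hx' := closure_mono hcover hx
  rw [closure_iUnion_of_finite] at hx'
  obtain ⟨i, hi⟩ := mem_iUnion.mp hx'
  obtain ⟨y, hyR, hxy⟩ := closure_nonempty_iff.mp ⟨x, hi⟩
  exact ⟨i, (closure_minimal inter_subset_left isClosed_Icc hi).1, hxy.trans_le hyR.2⟩

namespace BetaCylinder

def digitSeq {n : ℕ} (w : Fin n → ℤ) (i : ℕ) : ℤ := if h : i < n then w ⟨i, h⟩ else 0

noncomputable def betaValue (β : ℝ) (u : ℕ → ℤ) (k : ℕ) : ℝ :=
  ∑ i ∈ Finset.range k, (u i : ℝ) / β ^ (i + 1)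

noncomputable def betaUpper (β : ℝ) (u : ℕ → ℤ) (k : ℕ) : ℝ := betaValue β u k + (β ^ k)⁻¹

variable {β : ℝ} {u : ℕ → ℤ}

@[simp] theorem digitSeq_of_lt {n : ℕ} (w : Fin n → ℤ) {i : ℕ} (hi : i < n) :
    digitSeq w i = w ⟨i, hi⟩ :=
  dif_pos hi

theorem digitSeq_of_le {n : ℕ} (w : Fin n → ℤ) {i : ℕ} (hi : n ≤ i) : digitSeq w i = 0 :=
  dif_neg hi.not_gt

@[simp] theorem betaValue_zero : betaValue β u 0 = 0 := by simp [betaValue]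

@[simp] theorem betaUpper_zero : betaUpper β u 0 = 1 := by simp [betaUpper]

theorem betaValue_succ (k : ℕ) :
    betaValue β u (k + 1) = betaValue β u k + (u k : ℝ) / β ^ (k + 1) :=
  Finset.sum_range_succ _ _

theorem iterate_betaT_eq (hβ : β ≠ 0) {x : ℝ} {k : ℕ}
    (h : ∀ i < k, ⌊β * (betaT β)^[i] x⌋ = u i) :
    (betaT β)^[k] x = β ^ k * (x - betaValue β u k) := by
  induction k with
  | zero => simp
  | succ k ih =>
    rw [Function.iterate_succ_apply', betaT, Int.fract, h k k.lt_succ_self,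
      ih fun i hi => h i (hi.trans k.lt_succ_self), betaValue_succ]
    field_simp
    ring

theorem floor_eq_iff_mem_Ico (hβ : 0 < β) {x : ℝ} {k : ℕ}
    (h : (betaT β)^[k] x = β ^ k * (x - betaValue β u k)) :
    ⌊β * (betaT β)^[k] x⌋ = u k ↔ x ∈ Ico (betaValue β u (k + 1)) (betaUpper β u (k + 1)) := by
  have hpow : 0 < β ^ (k + 1) := by positivity
  rw [h, ← mul_assoc, ← pow_succ', Int.floor_eq_iff, betaUpper, betaValue_succ, mem_Ico,
    ← div_le_iff₀' hpow, ← lt_div_iff₀' hpow, add_div, one_div]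
  constructor <;> rintro ⟨h1, h2⟩ <;> constructor <;> linarith

theorem floor_iterate_eq_iff (hβ : 0 < β) {x : ℝ} {n : ℕ} :
    (∀ i < n, ⌊β * (betaT β)^[i] x⌋ = u i) ↔
      ∀ k < n, x ∈ Ico (betaValue β u (k + 1)) (betaUpper β u (k + 1)) := by
  induction n with
  | zero => simp
  | succ n ih =>
    rw [Nat.forall_lt_succ_right, Nat.forall_lt_succ_right, ← ih]
    exact and_congr_right fun h => floor_eq_iff_mem_Ico hβ (iterate_betaT_eq hβ.ne' h)

theorem mem_cylinder_iff_of_eq {n : ℕ} {w : Fin n → ℤ} (h : ∀ i (hi : i < n), w ⟨i, hi⟩ = u i)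
    {x : ℝ} : x ∈ cylinder β n w ↔ x ∈ Ico 0 1 ∧ ∀ i < n, ⌊β * (betaT β)^[i] x⌋ = u i := by
  simp +contextual [cylinder, Fin.forall_iff, h]

theorem mem_cylinder_iff {n : ℕ} {w : Fin n → ℤ} {x : ℝ} :
    x ∈ cylinder β n w ↔ x ∈ Ico 0 1 ∧ ∀ i < n, ⌊β * (betaT β)^[i] x⌋ = digitSeq w i :=
  mem_cylinder_iff_of_eq fun _ hi => (digitSeq_of_lt w hi).symm

theorem eq_of_mem_cylinder {n : ℕ} {w w' : Fin n → ℤ} {x : ℝ} (h : x ∈ cylinder β n w)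
    (h' : x ∈ cylinder β n w') : w = w' :=
  funext fun i => (h.2 i).symm.trans (h'.2 i)

theorem digitSeq_nonneg_of_mem_cylinder (hβ : 0 ≤ β) {n : ℕ} {w : Fin n → ℤ} {x : ℝ}
    (hx : x ∈ cylinder β n w) (i : ℕ) : 0 ≤ digitSeq w i := by
  rcases lt_or_ge i n with hi | hi
  · rw [← (mem_cylinder_iff.mp hx).2 i hi]
    refine Int.floor_nonneg.mpr (mul_nonneg hβ ?_)
    cases i with
    | zero => exact hx.1.1
    | succ j => rw [Function.iterate_succ_apply']; exact Int.fract_nonneg _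
  · rw [digitSeq_of_le w hi]

theorem betaValue_mono (hβ : 0 ≤ β) (hu : ∀ i, 0 ≤ u i) : Monotone (betaValue β u) :=
  fun _ _ h => Finset.sum_le_sum_of_subset_of_nonneg (Finset.range_mono h) fun i _ _ =>
    div_nonneg (by exact_mod_cast hu i) (by positivity)

noncomputable def rightEnd (β : ℝ) (u : ℕ → ℤ) (n : ℕ) : ℝ :=
  (Finset.range (n + 1)).inf' Finset.nonempty_range_add_one (betaUpper β u)

theorem rightEnd_le {n k : ℕ} (hk : k ≤ n) : rightEnd β u n ≤ betaUpper β u k :=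
  Finset.inf'_le _ (Finset.mem_range_succ_iff.mpr hk)

theorem lt_rightEnd_iff {n : ℕ} {x : ℝ} : x < rightEnd β u n ↔ ∀ k ≤ n, x < betaUpper β u k := by
  simp [rightEnd, Finset.lt_inf'_iff]

theorem cylinder_eq_Ico (hβ : 0 < β) {n : ℕ} {w : Fin n → ℤ} (hne : (cylinder β n w).Nonempty) :
    cylinder β n w = Ico (betaValue β (digitSeq w) n) (rightEnd β (digitSeq w) n) := by
  obtain ⟨y, hy⟩ := hne
  have hmono := betaValue_mono hβ.le (digitSeq_nonneg_of_mem_cylinder hβ.le hy)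
  ext x
  rw [mem_cylinder_iff, floor_iterate_eq_iff hβ]
  constructor
  · rintro ⟨⟨hx0, hx1⟩, h⟩
    refine ⟨?_, lt_rightEnd_iff.mpr fun k hk => ?_⟩
    · cases n with
      | zero => simpa using hx0
      | succ m => exact (h m m.lt_succ_self).1
    · cases k with
      | zero => simpa using hx1
      | succ k => exact (h k hk).2
  · rintro ⟨h1, h2⟩
    have hV0 : 0 ≤ betaValue β (digitSeq w) n := by simpa using hmono (Nat.zero_le n)
    refine ⟨⟨hV0.trans h1, by simpa using h2.trans_le (rightEnd_le (Nat.zero_le n))⟩,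
      fun k hk => ⟨(hmono hk).trans h1, h2.trans_le (rightEnd_le hk)⟩⟩

noncomputable def rightEndIndex (β : ℝ) (u : ℕ → ℤ) (n : ℕ) : ℕ :=
  sInf {k | k ≤ n ∧ betaUpper β u k = rightEnd β u n}

theorem rightEndIndex_spec (n : ℕ) :
    rightEndIndex β u n ≤ n ∧ betaUpper β u (rightEndIndex β u n) = rightEnd β u n := by
  obtain ⟨k, hk, hkeq⟩ := Finset.exists_mem_eq_inf' Finset.nonempty_range_add_one (betaUpper β u)
  exact Nat.sInf_mem (s := {k | k ≤ n ∧ _}) ⟨k, Finset.mem_range_succ_iff.mp hk, hkeq.symm⟩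

theorem rightEnd_lt_of_lt_rightEndIndex {n k : ℕ} (hk : k < rightEndIndex β u n) :
    rightEnd β u n < betaUpper β u k :=
  (rightEnd_le (hk.le.trans (rightEndIndex_spec n).1)).lt_of_ne fun h =>
    Nat.notMem_of_lt_sInf hk ⟨hk.le.trans (rightEndIndex_spec n).1, h.symm⟩

theorem rightEndIndex_lt_of_eq_zero (hβ : 1 ≤ β) {n j : ℕ} (hu : ∀ i, j ≤ i → u i = 0)
    (hnf : rightEnd β u n < betaUpper β u n) : rightEndIndex β u n < j := by
  by_contra! hj
  obtain ⟨hmn, hm⟩ := rightEndIndex_spec (β := β) (u := u) n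
  have hV : ∀ k, j ≤ k → betaValue β u k = betaValue β u j := fun k hk => by
    induction k, hk using Nat.le_induction with
    | base => rfl
    | succ k hk ih => rw [betaValue_succ, ih, hu k hk, Int.cast_zero, zero_div, add_zero]
  have hpow : (β ^ n)⁻¹ ≤ (β ^ rightEndIndex β u n)⁻¹ :=
    inv_anti₀ (by positivity) (pow_le_pow_right₀ hβ hmn)
  rw [← hm, betaUpper, betaUpper, hV _ hj, hV n (hj.trans hmn)] at hnf
  linarith

def truncSucc (u : ℕ → ℤ) (p i : ℕ) : ℤ := if i < p then u i else if i = p then u p + 1 else 0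

theorem betaValue_truncSucc_of_le {p k : ℕ} (hk : k ≤ p) :
    betaValue β (truncSucc u p) k = betaValue β u k :=
  Finset.sum_congr rfl fun i hi => by
    rw [truncSucc, if_pos (Finset.mem_range.mp hi |>.trans_le hk)]

theorem betaValue_truncSucc_of_lt {p k : ℕ} (hk : p < k) :
    betaValue β (truncSucc u p) k = betaUpper β u (p + 1) := by
  induction k, hk using Nat.le_induction with
  | base =>
    rw [betaValue_succ, betaValue_truncSucc_of_le le_rfl, betaUpper, betaValue_succ, truncSucc,
      if_neg (lt_irrefl p), if_pos rfl, Int.cast_add, Int.cast_one, add_div, one_div, add_assoc]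
  | succ k hk ih =>
    rw [betaValue_succ, ih, truncSucc, if_neg (by omega), if_neg (by omega), Int.cast_zero,
      zero_div, add_zero]

theorem rightEnd_mem_cylinder_truncSucc (hβ : 0 < β) (hu : ∀ i, 0 ≤ u i) {n p : ℕ}
    (hp : rightEndIndex β u n = p + 1) (hR : rightEnd β u n < 1) :
    rightEnd β u n ∈ cylinder β n (fun i => truncSucc u p i) := by
  have hRU : rightEnd β u n = betaUpper β u (p + 1) := hp ▸ (rightEndIndex_spec n).2.symm
  have hVR : betaValue β u (p + 1) ≤ rightEnd β u n :=
    hRU ▸ le_add_of_nonneg_right (by positivity)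
  have hmono := betaValue_mono hβ.le hu
  rw [mem_cylinder_iff_of_eq fun _ _ => rfl, floor_iterate_eq_iff hβ]
  have hV0 : 0 ≤ betaValue β u (p + 1) := by simpa using hmono (Nat.zero_le (p + 1))
  refine ⟨⟨hV0.trans hVR, hR⟩, fun k _ => ?_⟩
  rcases le_or_gt (k + 1) p with hkp | hkp
  · rw [betaUpper, betaValue_truncSucc_of_le hkp]
    exact ⟨(hmono (by omega)).trans hVR,
      rightEnd_lt_of_lt_rightEndIndex (by omega : k + 1 < rightEndIndex β u n)⟩
  · rw [betaUpper, betaValue_truncSucc_of_lt hkp, ← hRU]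
    exact ⟨le_rfl, lt_add_of_pos_right _ (by positivity)⟩

theorem rightEndIndex_lt_of_rightEnd_mem (hβ : 1 < β) {n : ℕ} {w w' : Fin n → ℤ}
    (hne : (cylinder β n w).Nonempty) (hmem : rightEnd β (digitSeq w) n ∈ cylinder β n w')
    (hnf : rightEnd β (digitSeq w') n < betaUpper β (digitSeq w') n) :
    rightEndIndex β (digitSeq w') n < rightEndIndex β (digitSeq w) n := by
  obtain ⟨y, hy⟩ := hne
  have hR : rightEnd β (digitSeq w) n < 1 := hmem.1.2
  obtain ⟨p, hp⟩ : ∃ p, rightEndIndex β (digitSeq w) n = p + 1 :=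
    Nat.exists_eq_succ_of_ne_zero fun h => by
    have := (rightEndIndex_spec (β := β) (u := digitSeq w) n).2
    rw [h, betaUpper_zero] at this
    exact hR.ne' this
  have hw' : w' = fun i : Fin n => truncSucc (digitSeq w) p i := eq_of_mem_cylinder hmem
    (rightEnd_mem_cylinder_truncSucc (by positivity)
      (digitSeq_nonneg_of_mem_cylinder (by positivity) hy) hp hR)
  rw [hp]
  refine rightEndIndex_lt_of_eq_zero hβ.le (fun i hi => ?_) hnf
  rcases lt_or_ge i n with hin | hin
  · simp only [digitSeq_of_lt _ hin, hw', truncSucc, if_neg (show ¬i < p by omega),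
      if_neg (show i ≠ p by omega)]
  · exact digitSeq_of_le _ hin

theorem left_mem_cylinder (hβ : 0 < β) {n : ℕ} {w : Fin n → ℤ} (hne : (cylinder β n w).Nonempty) :
    betaValue β (digitSeq w) n ∈ cylinder β n w := by
  have hC := cylinder_eq_Ico hβ hne
  rw [hC] at hne ⊢
  exact left_mem_Ico.mpr (nonempty_Ico.mp hne)

theorem injective_betaValue_digitSeq (hβ : 0 < β) {n : ℕ} {ι : Type*} {w : ι → Fin n → ℤ}
    (hinj : Function.Injective w) (hne : ∀ k, (cylinder β n (w k)).Nonempty) :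
    Function.Injective fun k => betaValue β (digitSeq (w k)) n :=
  fun i k (h : betaValue β _ n = betaValue β _ n) =>
    hinj (eq_of_mem_cylinder (h ▸ left_mem_cylinder hβ (hne i)) (left_mem_cylinder hβ (hne k)))

theorem rightEndIndex_lt_of_betaValue_lt (hβ : 1 < β) {n : ℕ} {ι : Type*} [Finite ι]
    {w : ι → Fin n → ℤ} (hinj : Function.Injective w) (hne : ∀ k, (cylinder β n (w k)).Nonempty)
    {a b : ℝ} (hab : closure (⋃ k, cylinder β n (w k)) = Icc a b)
    (hnf : ∀ k, rightEnd β (digitSeq (w k)) n < betaUpper β (digitSeq (w k)) n) {j k : ι}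
    (hjk : betaValue β (digitSeq (w j)) n < betaValue β (digitSeq (w k)) n) :
    rightEndIndex β (digitSeq (w k)) n < rightEndIndex β (digitSeq (w j)) n := by
  set L := fun k => betaValue β (digitSeq (w k)) n
  set R := fun k => rightEnd β (digitSeq (w k)) n
  have hβ0 : 0 < β := by positivity
  have hC : ∀ k, cylinder β n (w k) = Ico (L k) (R k) := fun k => cylinder_eq_Ico hβ0 (hne k)
  have hLR : ∀ k, L k < R k := fun k => by simpa [hC k] using hne k
  have hsub : ∀ k, Icc (L k) (R k) ⊆ Icc a b := fun k => by
    rw [← hab, ← closure_Ico (hLR k).ne, ← hC k]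
    exact closure_mono (subset_iUnion (fun i => cylinder β n (w i)) k)
  have hcov : closure (⋃ k, Ico (L k) (R k)) = Icc a b := by simpa only [hC] using hab
  induction hM : rightEndIndex β (digitSeq (w j)) n using Nat.strong_induction_on
    generalizing j with
  | _ m ih =>
  have hRL : R j ≤ L k := by
    by_contra! h
    exact hjk.ne (congrArg L (hinj (eq_of_mem_cylinder
      (hC j ▸ ⟨hjk.le, h⟩ : L k ∈ cylinder β n (w j)) (left_mem_cylinder hβ0 (hne k)))))
  obtain ⟨i, hi⟩ := exists_mem_Ico_of_closure_iUnion_eq_Icc hcov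
    ((hsub j ⟨le_rfl, (hLR j).le⟩).1.trans (hLR j).le)
    (hRL.trans_lt ((hLR k).trans_le (hsub k ⟨(hLR k).le, le_rfl⟩).2))
  have hij := hM ▸ rightEndIndex_lt_of_rightEnd_mem hβ (hne j) (hC i ▸ hi) (hnf i)
  rcases eq_or_ne i k with rfl | hik
  · exact hij
  · have hik' : L i < L k :=
      (hi.1.trans hRL).lt_of_ne ((injective_betaValue_digitSeq hβ0 hinj hne).ne hik)
    exact (ih _ hij hik' rfl).trans hij

theorem injective_rightEndIndex (hβ : 1 < β) {n : ℕ} {ι : Type*} [Finite ι]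
    {w : ι → Fin n → ℤ} (hinj : Function.Injective w) (hne : ∀ k, (cylinder β n (w k)).Nonempty)
    {a b : ℝ} (hab : closure (⋃ k, cylinder β n (w k)) = Icc a b)
    (hnf : ∀ k, rightEnd β (digitSeq (w k)) n < betaUpper β (digitSeq (w k)) n) :
    Function.Injective fun k => rightEndIndex β (digitSeq (w k)) n := by
  intro j k h
  by_contra hjk
  rcases ((injective_betaValue_digitSeq (by positivity) hinj hne).ne hjk).lt_or_gt with hlt | hlt
  · exact (rightEndIndex_lt_of_betaValue_lt hβ hinj hne hab hnf hlt).ne h.symm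
  · exact (rightEndIndex_lt_of_betaValue_lt hβ hinj hne hab hnf hlt).ne h

end BetaCylinder

open BetaCylinder in
theorem exists_full_cylinder_among_consecutive_general
    (β : ℝ) (hβ : 1 < β) (n : ℕ)
    (w : Fin (n + 1) → Fin n → ℤ) (hinj : Function.Injective w)
    (hne : ∀ k, (cylinder β n (w k)).Nonempty)
    (hconsec : ∃ a b : ℝ, closure (⋃ k, cylinder β n (w k)) = Set.Icc a b) :
    ∃ k, ∃ a : ℝ, cylinder β n (w k) = Set.Ico a (a + (β ^ n)⁻¹) := by
  obtain ⟨a, b, hab⟩ := hconsec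
  by_contra! hfull
  have hnf : ∀ k, rightEnd β (digitSeq (w k)) n < betaUpper β (digitSeq (w k)) n := fun k =>
    (rightEnd_le le_rfl).lt_of_ne fun h =>
      hfull k _ (by rw [cylinder_eq_Ico (by positivity) (hne k), h, betaUpper])
  have hlt : ∀ k, rightEndIndex β (digitSeq (w k)) n < n := fun k =>
    (rightEndIndex_spec n).1.lt_of_ne fun h => (hnf k).ne (h ▸ (rightEndIndex_spec n).2).symm
  have := Fintype.card_le_of_injective (fun k => (⟨_, hlt k⟩ : Fin n))
    fun j k h => injective_rightEndIndex hβ hinj hne hab hnf (Fin.mk.inj_iff.mp h)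
  simp at this

/-- **Bugeaud–Wang.** Let `β > 1` and `n ≥ 1`. Among any `n+1` consecutive cylinders of
order `n` — i.e. `n+1` pairwise distinct nonempty cylinders, adjacent in the left-to-right
ordering in the sense that the closure of their union is an interval — at least one is a
full cylinder, i.e. has length exactly `β^{-n}`. -/
theorem exists_full_cylinder_among_consecutive
    (β : ℝ) (hβ : 1 < β) (n : ℕ) (hn : 1 ≤ n)
    (w : Fin (n + 1) → Fin n → ℤ) (hinj : Function.Injective w)
    (hne : ∀ k, (cylinder β n (w k)).Nonempty)
    (hconsec : ∃ a b : ℝ, closure (⋃ k, cylinder β n (w k)) = Set.Icc a b) :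
    ∃ k, ∃ a : ℝ, cylinder β n (w k) = Set.Ico a (a + (β ^ n)⁻¹) :=
  exists_full_cylinder_among_consecutive_general β hβ n w hinj hne hconsec
end
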